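/- arXiv:2301.05014 — 8 statements merged into one kernel-verified Lean document; each statement's English description precedes it below -/
import Mathlib

section
/- Let E be a real Hilbert space, let T > 0, τ > 0 and N ∈ ℕ with N·τ ≤ T, and set t^k = k·τ. Suppose φ : ℝ → E is differentiable at every point of [0,T] with derivative φ′ such that φ′ is Bochner integrable on [0,T] and t ↦ ‖φ′(t)‖² is integrable on [0,T]. Then τ · Σ_{k=1}^{N} ‖(φ(t^k) − φ(t^{k−1}))/τ‖² ≤ ∫₀^T ‖φ′(t)‖² dt. -/
open MeasureTheory


/-- Cauchy–Schwarz for a vector-valued integral over an interval. -/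
lemma norm_intervalIntegral_sq_le {E : Type*} [NormedAddCommGroup E] [NormedSpace ℝ E]
    [CompleteSpace E] {a b : ℝ} (hab : a ≤ b) {f : ℝ → E}
    (hf : IntegrableOn f (Set.Ioc a b))
    (hf2 : IntegrableOn (fun t => ‖f t‖ ^ 2) (Set.Ioc a b)) :
    ‖∫ t in a..b, f t‖ ^ 2 ≤ (b - a) * ∫ t in a..b, ‖f t‖ ^ 2 := by
  set μ := volume.restrict (Set.Ioc a b) with hμ
  have hμfin : IsFiniteMeasure μ := by
    constructor
    rw [hμ, Measure.restrict_apply_univ]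
    exact measure_Ioc_lt_top
  have hg : MemLp (fun t => ‖f t‖) 2 μ :=
    (memLp_two_iff_integrable_sq hf.norm.aestronglyMeasurable).2 hf2
  have h1 : MemLp (fun _ : ℝ => (1 : ℝ)) 2 μ := memLp_const 1
  have hold := integral_mul_le_Lp_mul_Lq_of_nonneg Real.HolderConjugate.two_two
    (Filter.Eventually.of_forall fun x => norm_nonneg (f x))
    (Filter.Eventually.of_forall fun _ => zero_le_one)
    (by simpa using hg) (by simpa using h1)
  norm_num at hold
  have hμuniv : (μ Set.univ).toReal = b - a := by
    simp [hμ, Real.volume_Ioc, ENNReal.toReal_ofReal (sub_nonneg.2 hab)]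
  rw [measureReal_def, hμuniv] at hold
  have hint_nonneg : 0 ≤ ∫ t, ‖f t‖ ^ 2 ∂μ :=
    integral_nonneg fun t => sq_nonneg _
  have key : ‖∫ t in a..b, f t‖ ≤
      Real.sqrt (∫ t, ‖f t‖ ^ 2 ∂μ) * Real.sqrt (b - a) := by
    calc ‖∫ t in a..b, f t‖ ≤ ∫ t, ‖f t‖ ∂μ := by
          rw [intervalIntegral.integral_of_le hab]
          exact norm_integral_le_integral_norm f
      _ ≤ (∫ t, ‖f t‖ ^ 2 ∂μ) ^ (1/2 : ℝ) * (b - a) ^ (1/2 : ℝ) := hold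
      _ = Real.sqrt (∫ t, ‖f t‖ ^ 2 ∂μ) * Real.sqrt (b - a) := by
          rw [Real.sqrt_eq_rpow, Real.sqrt_eq_rpow]
  calc ‖∫ t in a..b, f t‖ ^ 2
      ≤ (Real.sqrt (∫ t, ‖f t‖ ^ 2 ∂μ) * Real.sqrt (b - a)) ^ 2 :=
        pow_le_pow_left₀ (norm_nonneg _) key 2
    _ = (∫ t, ‖f t‖ ^ 2 ∂μ) * (b - a) := by
        rw [mul_pow, Real.sq_sqrt hint_nonneg, Real.sq_sqrt (sub_nonneg.2 hab)]
    _ = (b - a) * ∫ t in a..b, ‖f t‖ ^ 2 := by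
        rw [mul_comm, intervalIntegral.integral_of_le hab]

/-- Backward difference quotients are controlled in the discrete
`L²`-in-time norm by the `L²`-norm of the time derivative (cf. Lemma on time
discretization errors, estimate \eqref{edts0}). -/
theorem discrete_time_derivative_L2_bound
    {E : Type*} [NormedAddCommGroup E] [InnerProductSpace ℝ E] [CompleteSpace E]
    (T τ : ℝ) (hT : 0 < T) (hτ : 0 < τ) (N : ℕ) (hNT : (N : ℝ) * τ ≤ T)
    (φ φ' : ℝ → E)
    (hderiv : ∀ t ∈ Set.Icc (0 : ℝ) T, HasDerivAt φ (φ' t) t)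
    (hint : IntegrableOn φ' (Set.Icc (0 : ℝ) T))
    (hint2 : IntegrableOn (fun t => ‖φ' t‖ ^ 2) (Set.Icc (0 : ℝ) T)) :
    τ * ∑ k ∈ Finset.Icc 1 N, ‖τ⁻¹ • (φ ((k : ℝ) * τ) - φ (((k : ℝ) - 1) * τ))‖ ^ 2
      ≤ ∫ t in (0 : ℝ)..T, ‖φ' t‖ ^ 2 := by
  -- subinterval inclusions
  have hsub : ∀ k : ℕ, k ∈ Finset.Icc 1 N →
      Set.Icc (((k : ℝ) - 1) * τ) ((k : ℝ) * τ) ⊆ Set.Icc (0 : ℝ) T := by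
    intro k hk
    rw [Finset.mem_Icc] at hk
    apply Set.Icc_subset_Icc
    · have : (1 : ℝ) ≤ (k : ℝ) := by exact_mod_cast hk.1
      nlinarith
    · have : (k : ℝ) ≤ (N : ℝ) := by exact_mod_cast hk.2
      nlinarith
  have hle : ∀ k : ℕ, ((k : ℝ) - 1) * τ ≤ (k : ℝ) * τ ∧ ((k:ℝ)-1)*τ ≤ (k:ℝ)*τ := by
    intro k; constructor <;> nlinarith [Nat.cast_nonneg (α := ℝ) k]
  -- pointwise bound per k
  have hterm : ∀ k ∈ Finset.Icc 1 N,
      ‖τ⁻¹ • (φ ((k : ℝ) * τ) - φ (((k : ℝ) - 1) * τ))‖ ^ 2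
        ≤ τ⁻¹ * ∫ t in (((k:ℝ)-1)*τ)..((k:ℝ)*τ), ‖φ' t‖ ^ 2 := by
    intro k hk
    have hab : ((k:ℝ)-1)*τ ≤ (k:ℝ)*τ := (hle k).1
    have hIcc := hsub k hk
    have hIoc : Set.Ioc (((k:ℝ)-1)*τ) ((k:ℝ)*τ) ⊆ Set.Icc (0 : ℝ) T :=
      fun x hx => hIcc (Set.Ioc_subset_Icc_self hx)
    have hii : IntervalIntegrable φ' volume (((k:ℝ)-1)*τ) ((k:ℝ)*τ) := by
      rw [intervalIntegrable_iff_integrableOn_Ioc_of_le hab]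
      exact hint.mono_set hIoc
    have hftc : φ ((k:ℝ)*τ) - φ (((k:ℝ)-1)*τ) = ∫ t in (((k:ℝ)-1)*τ)..((k:ℝ)*τ), φ' t :=
      (intervalIntegral.integral_eq_sub_of_hasDerivAt
        (fun t ht => hderiv t (hIcc (by rwa [Set.uIcc_of_le hab] at ht))) hii).symm
    have hcs := norm_intervalIntegral_sq_le hab (hint.mono_set hIoc)
      (hint2.mono_set hIoc)
    have hτlen : (k:ℝ)*τ - ((k:ℝ)-1)*τ = τ := by ring
    rw [hτlen] at hcs
    rw [norm_smul, mul_pow, hftc]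
    have : ‖τ⁻¹‖ ^ 2 = τ⁻¹ * τ⁻¹ := by
      rw [Real.norm_eq_abs, abs_of_pos (inv_pos.2 hτ)]; ring
    rw [this, mul_assoc]
    gcongr
    calc τ⁻¹ * ‖∫ t in (((k:ℝ)-1)*τ)..((k:ℝ)*τ), φ' t‖ ^ 2
        ≤ τ⁻¹ * (τ * ∫ t in (((k:ℝ)-1)*τ)..((k:ℝ)*τ), ‖φ' t‖ ^ 2) := by
          gcongr
      _ = ∫ t in (((k:ℝ)-1)*τ)..((k:ℝ)*τ), ‖φ' t‖ ^ 2 := by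
          field_simp
  -- sum the bounds
  have hsum : ∑ k ∈ Finset.Icc 1 N, ‖τ⁻¹ • (φ ((k : ℝ) * τ) - φ (((k : ℝ) - 1) * τ))‖ ^ 2
      ≤ ∑ k ∈ Finset.Icc 1 N, τ⁻¹ * ∫ t in (((k:ℝ)-1)*τ)..((k:ℝ)*τ), ‖φ' t‖ ^ 2 :=
    Finset.sum_le_sum hterm
  -- adjacent intervals
  have hiik : ∀ k < N, IntervalIntegrable (fun t => ‖φ' t‖ ^ 2) volume
      ((k:ℝ)*τ) ((((k:ℕ)+1 : ℕ):ℝ)*τ) := by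
    intro k hkN
    have hab : (k:ℝ)*τ ≤ ((k+1 : ℕ):ℝ)*τ := by
      push_cast; nlinarith [Nat.cast_nonneg (α := ℝ) k]
    rw [intervalIntegrable_iff_integrableOn_Ioc_of_le hab]
    apply hint2.mono_set
    intro x hx
    have h1 : (0:ℝ) ≤ (k:ℝ)*τ := by positivity
    have h2 : ((k+1:ℕ):ℝ)*τ ≤ T := by
      have : ((k+1:ℕ):ℝ) ≤ (N:ℝ) := by exact_mod_cast hkN
      nlinarith
    exact ⟨le_of_lt (lt_of_le_of_lt h1 hx.1), le_trans hx.2 h2⟩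
  have hadj := intervalIntegral.sum_integral_adjacent_intervals
    (f := fun t => ‖φ' t‖ ^ 2) (μ := volume) (a := fun k => (k:ℝ)*τ) (n := N) hiik
  have hreindex : ∑ k ∈ Finset.Icc 1 N, (∫ t in (((k:ℝ)-1)*τ)..((k:ℝ)*τ), ‖φ' t‖ ^ 2)
      = ∑ k ∈ Finset.range N, ∫ t in ((k:ℝ)*τ)..(((k:ℕ)+1:ℕ):ℝ)*τ, ‖φ' t‖ ^ 2 := by
    rw [← Finset.Ico_add_one_right_eq_Icc, Finset.sum_Ico_eq_sum_range]
    apply Finset.sum_congr (by simp)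
    intro i _
    push_cast
    ring_nf
  have hmono : (∫ t in (0:ℝ)..((N:ℝ)*τ), ‖φ' t‖ ^ 2) ≤ ∫ t in (0:ℝ)..T, ‖φ' t‖ ^ 2 := by
    apply intervalIntegral.integral_mono_interval (le_refl (0:ℝ)) (by positivity) hNT
    · exact Filter.Eventually.of_forall fun t => sq_nonneg _
    · rw [intervalIntegrable_iff_integrableOn_Ioc_of_le hT.le]
      exact hint2.mono_set Set.Ioc_subset_Icc_self
  calc τ * ∑ k ∈ Finset.Icc 1 N, ‖τ⁻¹ • (φ ((k : ℝ) * τ) - φ (((k : ℝ) - 1) * τ))‖ ^ 2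
      ≤ τ * ∑ k ∈ Finset.Icc 1 N, τ⁻¹ * ∫ t in (((k:ℝ)-1)*τ)..((k:ℝ)*τ), ‖φ' t‖ ^ 2 :=
        mul_le_mul_of_nonneg_left hsum hτ.le
    _ = ∑ k ∈ Finset.Icc 1 N, ∫ t in (((k:ℝ)-1)*τ)..((k:ℝ)*τ), ‖φ' t‖ ^ 2 := by
        rw [← Finset.mul_sum, ← mul_assoc, mul_inv_cancel₀ hτ.ne', one_mul]
    _ = ∫ t in (0:ℝ)..((N:ℝ)*τ), ‖φ' t‖ ^ 2 := by
        rw [hreindex, hadj]; norm_num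
    _ ≤ ∫ t in (0:ℝ)..T, ‖φ' t‖ ^ 2 := hmono
end

section
/- Let E be a real Hilbert space, let T > 0, τ > 0 and N ∈ ℕ with N·τ ≤ T, and set t^k = k·τ. Suppose φ : ℝ → E is twice differentiable at every point of [0,T], with first derivative φ′ and second derivative φ″ such that φ″ is Bochner integrable on [0,T] and t ↦ ‖φ″(t)‖² is integrable on [0,T]. Then τ · Σ_{k=1}^{N} ‖(φ(t^k) − φ(t^{k−1}))/τ − φ′(t^k)‖² ≤ (τ²/3) · ∫₀^T ‖φ″(t)‖² dt. -/
open MeasureTheory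

private theorem key_step
    {E : Type*} [NormedAddCommGroup E] [InnerProductSpace ℝ E] [CompleteSpace E]
    (T : ℝ) (φ φ' φ'' : ℝ → E)
    (hderiv : ∀ t ∈ Set.Icc (0 : ℝ) T, HasDerivAt φ (φ' t) t)
    (hderiv2 : ∀ t ∈ Set.Icc (0 : ℝ) T, HasDerivAt φ' (φ'' t) t)
    (hint : IntegrableOn φ'' (Set.Icc (0 : ℝ) T))
    (hint2 : IntegrableOn (fun t => ‖φ'' t‖ ^ 2) (Set.Icc (0 : ℝ) T))
    (a b : ℝ) (ha : 0 ≤ a) (hb : b ≤ T) (hab : a < b) :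
    ‖(b - a)⁻¹ • (φ b - φ a) - φ' b‖ ^ 2
      ≤ (b - a) / 3 * ∫ t in Set.Ioc a b, ‖φ'' t‖ ^ 2 := by
  have hsub : Set.Icc a b ⊆ Set.Icc 0 T := Set.Icc_subset_Icc ha hb
  have hsub' : Set.Ioc a b ⊆ Set.Icc 0 T := Set.Ioc_subset_Icc_self.trans hsub
  have hτ : 0 < b - a := sub_pos.2 hab
  set g : ℝ → E := fun u => (u - a) • φ'' u with hgdef
  have hgi : IntegrableOn g (Set.Icc a b) :=
    (hint.mono_set hsub).continuousOn_smul (by fun_prop) isCompact_Icc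
  -- FTC / integration by parts
  have hF : ∀ u ∈ Set.uIcc a b, HasDerivAt (fun u => (u - a) • φ' u - φ u) (g u) u := by
    intro u hu
    rw [Set.uIcc_of_le hab.le] at hu
    have h1 : HasDerivAt (fun u : ℝ => u - a) 1 u := (hasDerivAt_id u).sub_const a
    have h2 := (h1.smul (hderiv2 u (hsub hu))).sub (hderiv u (hsub hu))
    convert h2 using 1
    · rfl
    simp [hgdef]
  have hftc : (∫ u in a..b, g u) = (b - a) • φ' b - (φ b - φ a) := by
    rw [intervalIntegral.integral_eq_sub_of_hasDerivAt hF
      (((Set.uIcc_of_le hab.le).symm ▸ hgi).intervalIntegrable)]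
    simp
    abel
  have herr : φ' b - (b - a)⁻¹ • (φ b - φ a) = (b - a)⁻¹ • ∫ u in a..b, g u := by
    rw [hftc]
    simp only [smul_sub, smul_smul, inv_mul_cancel₀ hτ.ne', one_smul]
  -- norm bound
  have hIoc : Set.Ioc a b ⊆ Set.Icc a b := Set.Ioc_subset_Icc_self
  have h1 : ‖∫ u in a..b, g u‖ ≤ ∫ u in Set.Ioc a b, (u - a) * ‖φ'' u‖ := by
    calc ‖∫ u in a..b, g u‖ ≤ ∫ u in a..b, ‖g u‖ :=
          intervalIntegral.norm_integral_le_integral_norm hab.le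
      _ = ∫ u in Set.Ioc a b, ‖g u‖ := intervalIntegral.integral_of_le hab.le
      _ = ∫ u in Set.Ioc a b, (u - a) * ‖φ'' u‖ := by
          refine setIntegral_congr_fun measurableSet_Ioc fun u hu => ?_
          rw [hgdef]
          rw [norm_smul, Real.norm_eq_abs, abs_of_pos (sub_pos.2 hu.1)]
  -- Cauchy-Schwarz
  set μ := volume.restrict (Set.Ioc a b) with hμ
  have hconj : Real.HolderConjugate 2 2 := Real.HolderConjugate.two_two
  have hfm : MemLp (fun u : ℝ => u - a) (ENNReal.ofReal 2) μ := by
    rw [show ENNReal.ofReal 2 = 2 by norm_num]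
    rw [memLp_two_iff_integrable_sq (by fun_prop)]
    exact ((continuous_id.sub continuous_const).pow 2).integrableOn_Ioc
  have hgm : MemLp (fun u => ‖φ'' u‖) (ENNReal.ofReal 2) μ := by
    rw [show ENNReal.ofReal 2 = 2 by norm_num]
    rw [memLp_two_iff_integrable_sq ((hint.mono_set hsub').aestronglyMeasurable.norm)]
    exact hint2.mono_set hsub'
  have hf0 : 0 ≤ᵐ[μ] fun u : ℝ => u - a := by
    rw [hμ, Filter.EventuallyLE, ae_restrict_iff' measurableSet_Ioc]
    exact Filter.Eventually.of_forall fun u hu => sub_nonneg.2 hu.1.le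
  have hg0 : 0 ≤ᵐ[μ] fun u => ‖φ'' u‖ :=
    Filter.Eventually.of_forall fun u => norm_nonneg _
  have hCS := integral_mul_le_Lp_mul_Lq_of_nonneg hconj hf0 hg0 hfm hgm
  simp only [show ((2 : ℝ)) = ((2 : ℕ) : ℝ) by norm_num, Real.rpow_natCast] at hCS
  set A : ℝ := ∫ u in Set.Ioc a b, (u - a) ^ (2 : ℕ) with hAdef
  set I : ℝ := ∫ u in Set.Ioc a b, ‖φ'' u‖ ^ (2 : ℕ) with hIdef
  have hA : A = (b - a) ^ 3 / 3 := by
    rw [hAdef, ← intervalIntegral.integral_of_le hab.le,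
      intervalIntegral.integral_comp_sub_right (fun u => u ^ (2 : ℕ)) a]
    simp; norm_num
  have hA0 : (0 : ℝ) ≤ A := by rw [hA]; positivity
  have hI0 : (0 : ℝ) ≤ I :=
    setIntegral_nonneg measurableSet_Ioc fun u _ => by positivity
  have hCS' : (∫ u in Set.Ioc a b, (u - a) * ‖φ'' u‖) ≤ Real.sqrt A * Real.sqrt I := by
    rw [Real.sqrt_eq_rpow, Real.sqrt_eq_rpow]
    exact hCS
  -- combine
  have hnorm : ‖(b - a)⁻¹ • (φ b - φ a) - φ' b‖
      ≤ (b - a)⁻¹ * (Real.sqrt A * Real.sqrt I) := by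
    rw [norm_sub_rev, herr, norm_smul, Real.norm_eq_abs, abs_of_pos (inv_pos.2 hτ)]
    exact mul_le_mul_of_nonneg_left (h1.trans hCS') (inv_pos.2 hτ).le
  calc ‖(b - a)⁻¹ • (φ b - φ a) - φ' b‖ ^ 2
      ≤ ((b - a)⁻¹ * (Real.sqrt A * Real.sqrt I)) ^ 2 :=
        pow_le_pow_left₀ (norm_nonneg _) hnorm 2
    _ = (b - a)⁻¹ ^ 2 * (A * I) := by
        rw [mul_pow, mul_pow, Real.sq_sqrt hA0, Real.sq_sqrt hI0]
    _ = (b - a) / 3 * I := by rw [hA]; field_simp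
    _ = (b - a) / 3 * ∫ t in Set.Ioc a b, ‖φ'' t‖ ^ 2 := rfl

/-- The backward difference quotient approximates the derivative at
the right endpoint with first order in `τ`, in the discrete `L²`-in-time norm
(cf. estimate \eqref{edts1}). -/
theorem discrete_time_derivative_backward_error_bound
    {E : Type*} [NormedAddCommGroup E] [InnerProductSpace ℝ E] [CompleteSpace E]
    (T τ : ℝ) (hT : 0 < T) (hτ : 0 < τ) (N : ℕ) (hNT : (N : ℝ) * τ ≤ T)
    (φ φ' φ'' : ℝ → E)
    (hderiv : ∀ t ∈ Set.Icc (0 : ℝ) T, HasDerivAt φ (φ' t) t)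
    (hderiv2 : ∀ t ∈ Set.Icc (0 : ℝ) T, HasDerivAt φ' (φ'' t) t)
    (hint : IntegrableOn φ'' (Set.Icc (0 : ℝ) T))
    (hint2 : IntegrableOn (fun t => ‖φ'' t‖ ^ 2) (Set.Icc (0 : ℝ) T)) :
    τ * ∑ k ∈ Finset.Icc 1 N,
        ‖τ⁻¹ • (φ ((k : ℝ) * τ) - φ (((k : ℝ) - 1) * τ)) - φ' ((k : ℝ) * τ)‖ ^ 2
      ≤ τ ^ 2 / 3 * ∫ t in (0 : ℝ)..T, ‖φ'' t‖ ^ 2 := by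
  have hkey : ∀ k ∈ Finset.Icc 1 N,
      ‖τ⁻¹ • (φ ((k : ℝ) * τ) - φ (((k : ℝ) - 1) * τ)) - φ' ((k : ℝ) * τ)‖ ^ 2
        ≤ τ / 3 * ∫ t in Set.Ioc (((k : ℝ) - 1) * τ) ((k : ℝ) * τ), ‖φ'' t‖ ^ 2 := by
    intro k hk
    obtain ⟨hk1, hkN⟩ := Finset.mem_Icc.1 hk
    have hk1' : (1 : ℝ) ≤ (k : ℝ) := by exact_mod_cast hk1
    have hkN' : (k : ℝ) ≤ (N : ℝ) := by exact_mod_cast hkN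
    have hba : (k : ℝ) * τ - ((k : ℝ) - 1) * τ = τ := by ring
    have h := key_step T φ φ' φ'' hderiv hderiv2 hint hint2
      (((k : ℝ) - 1) * τ) ((k : ℝ) * τ)
      (mul_nonneg (by linarith) hτ.le)
      (le_trans (mul_le_mul_of_nonneg_right hkN' hτ.le) hNT)
      (by nlinarith)
    rwa [hba] at h
  have hii : ∀ (c d : ℝ), 0 ≤ c → c ≤ T → 0 ≤ d → d ≤ T →
      IntervalIntegrable (fun t => ‖φ'' t‖ ^ 2) volume c d :=
    fun c d hc hc2 hd hd2 => (hint2.mono_set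
      ((Set.uIcc_subset_uIcc ((Set.uIcc_of_le hT.le) ▸ Set.mem_Icc.2 ⟨hc, hc2⟩)
        ((Set.uIcc_of_le hT.le) ▸ Set.mem_Icc.2 ⟨hd, hd2⟩)).trans
        (Set.uIcc_of_le hT.le).subset)).intervalIntegrable
  have hbd : ∀ i : ℕ, i ≤ N → 0 ≤ (i : ℝ) * τ ∧ (i : ℝ) * τ ≤ T := by
    intro i hi
    have : (i : ℝ) ≤ (N : ℝ) := by exact_mod_cast hi
    exact ⟨mul_nonneg (Nat.cast_nonneg i) hτ.le,
      le_trans (mul_le_mul_of_nonneg_right this hτ.le) hNT⟩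
  have hsum : ∑ k ∈ Finset.Icc 1 N,
      (∫ t in Set.Ioc (((k : ℝ) - 1) * τ) ((k : ℝ) * τ), ‖φ'' t‖ ^ 2)
      = ∫ t in (0 : ℝ)..((N : ℝ) * τ), ‖φ'' t‖ ^ 2 := by
    have hadj := intervalIntegral.sum_integral_adjacent_intervals
      (a := fun i : ℕ => (i : ℝ) * τ) (n := N) (f := fun t => ‖φ'' t‖ ^ 2)
      (μ := volume) (fun i hi => hii _ _ (hbd i hi.le).1 (hbd i hi.le).2
        (hbd (i + 1) hi).1 (hbd (i + 1) hi).2)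
    simp only [Nat.cast_zero, zero_mul] at hadj
    rw [← hadj, ← Finset.Ico_add_one_right_eq_Icc, Finset.sum_Ico_eq_sum_range]
    refine Finset.sum_congr (by simp) fun i _ => ?_
    rw [intervalIntegral.integral_of_le
      (by push_cast; nlinarith [Nat.cast_nonneg (α := ℝ) i] : (i : ℝ) * τ ≤ ((i : ℕ) + 1 : ℕ) * τ)]
    push_cast
    ring_nf
  calc τ * ∑ k ∈ Finset.Icc 1 N,
        ‖τ⁻¹ • (φ ((k : ℝ) * τ) - φ (((k : ℝ) - 1) * τ)) - φ' ((k : ℝ) * τ)‖ ^ 2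
      ≤ τ * ∑ k ∈ Finset.Icc 1 N,
        (τ / 3 * ∫ t in Set.Ioc (((k : ℝ) - 1) * τ) ((k : ℝ) * τ), ‖φ'' t‖ ^ 2) :=
        mul_le_mul_of_nonneg_left (Finset.sum_le_sum hkey) hτ.le
    _ = τ ^ 2 / 3 * ∑ k ∈ Finset.Icc 1 N,
        (∫ t in Set.Ioc (((k : ℝ) - 1) * τ) ((k : ℝ) * τ), ‖φ'' t‖ ^ 2) := by
        rw [Finset.mul_sum, Finset.mul_sum]
        exact Finset.sum_congr rfl fun k _ => by ring
    _ = τ ^ 2 / 3 * ∫ t in (0 : ℝ)..((N : ℝ) * τ), ‖φ'' t‖ ^ 2 := by rw [hsum]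
    _ ≤ τ ^ 2 / 3 * ∫ t in (0 : ℝ)..T, ‖φ'' t‖ ^ 2 := by
        refine mul_le_mul_of_nonneg_left ?_ (by positivity)
        refine intervalIntegral.integral_mono_interval le_rfl (hbd N le_rfl).1 hNT
          (Filter.Eventually.of_forall fun t => by positivity)
          (hii 0 T le_rfl hT.le hT.le le_rfl)
end

section
/- Let E be a real Hilbert space, let T > 0, τ > 0 and N ∈ ℕ with (N+1)·τ ≤ T, and set t^k = k·τ. Suppose φ : ℝ → E is twice differentiable at every point of [0,T], with first derivative φ′ and second derivative φ″ such that φ″ is Bochner integrable on [0,T] and t ↦ ‖φ″(t)‖² is integrable on [0,T]. Then τ · Σ_{k=1}^{N} ‖(φ(t^{k+1}) − φ(t^k))/τ − φ′(t^k)‖² ≤ (τ²/3) · ∫₀^T ‖φ″(t)‖² dt. -/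
open MeasureTheory intervalIntegral
set_option maxHeartbeats 1000000

theorem key_taylor
    {E : Type*} [NormedAddCommGroup E] [InnerProductSpace ℝ E] [CompleteSpace E]
    (a b : ℝ) (hab : a ≤ b)
    (φ φ' φ'' : ℝ → E)
    (hderiv : ∀ t ∈ Set.Icc a b, HasDerivAt φ (φ' t) t)
    (hderiv2 : ∀ t ∈ Set.Icc a b, HasDerivAt φ' (φ'' t) t)
    (hint : IntegrableOn φ'' (Set.Icc a b))
    (hint2 : IntegrableOn (fun t => ‖φ'' t‖ ^ 2) (Set.Icc a b)) :
    ‖φ b - φ a - (b - a) • φ' a‖ ^ 2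
      ≤ (b - a) ^ 3 / 3 * ∫ t in a..b, ‖φ'' t‖ ^ 2 := by
  set R := φ b - φ a - (b - a) • φ' a with hR
  have hmeas : AEStronglyMeasurable φ'' (volume.restrict (Set.Ioc a b)) :=
    hint.1.mono_measure (Measure.restrict_mono Set.Ioc_subset_Icc_self le_rfl)
  have hii : IntervalIntegrable (fun s => (b - s) • φ'' s) volume a b := by
    rw [intervalIntegrable_iff_integrableOn_Ioc_of_le hab]
    have hg : Integrable (fun s => (b - a) * ‖φ'' s‖) (volume.restrict (Set.Ioc a b)) :=
      ((hint.mono_set Set.Ioc_subset_Icc_self).norm.const_mul (b - a))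
    have hm2 : AEStronglyMeasurable (fun s => (b - s) • φ'' s)
        (volume.restrict (Set.Ioc a b)) := by
      apply AEStronglyMeasurable.smul _ hmeas
      exact (continuous_const.sub continuous_id).aestronglyMeasurable
    refine hg.mono' hm2 ?_
    filter_upwards [ae_restrict_mem measurableSet_Ioc] with s hs
    rw [norm_smul]
    refine mul_le_mul_of_nonneg_right ?_ (norm_nonneg _)
    rw [Real.norm_eq_abs, abs_of_nonneg (by linarith [hs.2])]
    linarith [hs.1.le]
  -- Taylor identity
  have hident : (∫ s in a..b, (b - s) • φ'' s) = R := by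
    have hF : ∀ s ∈ Set.uIcc a b,
        HasDerivAt (fun u => φ u + (b - u) • φ' u) ((b - s) • φ'' s) s := by
      intro s hs
      rw [Set.uIcc_of_le hab] at hs
      have h1 := hderiv s hs
      have h2 : HasDerivAt (fun u => (b - u) • φ' u)
          ((b - s) • φ'' s + (-1 : ℝ) • φ' s) s := by
        exact (HasDerivAt.smul (((hasDerivAt_id s).const_sub b)) (hderiv2 s hs)).congr_deriv (by simp)
      convert h1.add h2 using 1
      · rfl
      · rw [neg_one_smul]; abel
    rw [integral_eq_sub_of_hasDerivAt hF hii]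
    simp only [hR, sub_self, zero_smul, add_zero, sub_smul]
    abel
  -- norm bound by weighted L1 norm
  have hnorm : ‖R‖ ≤ ∫ s in a..b, (b - s) * ‖φ'' s‖ := by
    rw [← hident]
    refine (intervalIntegral.norm_integral_le_integral_norm hab).trans_eq ?_
    rw [integral_of_le hab, integral_of_le hab]
    refine setIntegral_congr_fun measurableSet_Ioc fun s hs => ?_
    rw [norm_smul, Real.norm_eq_abs, abs_of_nonneg (by linarith [hs.2])]
  -- Cauchy–Schwarz
  have hpq : Real.HolderConjugate 2 2 := Real.HolderConjugate.two_two
  have hμ : IsFiniteMeasure (volume.restrict (Set.Ioc a b)) := by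
    constructor
    simp [Real.volume_Ioc]
  have hf2 : MemLp (fun s => b - s) (ENNReal.ofReal 2) (volume.restrict (Set.Ioc a b)) := by
    rw [show ENNReal.ofReal 2 = 2 by norm_num]
    rw [memLp_two_iff_integrable_sq (f := fun s => b - s) ((continuous_const.sub continuous_id').aestronglyMeasurable)]
    exact ((continuous_const.sub continuous_id').pow 2).integrableOn_Ioc
  have hg2 : MemLp (fun s => ‖φ'' s‖) (ENNReal.ofReal 2) (volume.restrict (Set.Ioc a b)) := by
    rw [show ENNReal.ofReal 2 = 2 by norm_num]
    rw [memLp_two_iff_integrable_sq hmeas.norm]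
    exact hint2.mono_set Set.Ioc_subset_Icc_self
  have hCS : (∫ s in a..b, (b - s) * ‖φ'' s‖)
      ≤ (∫ s in a..b, (b - s) ^ 2) ^ ((1:ℝ)/2) * (∫ s in a..b, ‖φ'' s‖ ^ 2) ^ ((1:ℝ)/2) := by
    rw [integral_of_le hab, integral_of_le hab, integral_of_le hab]
    have := integral_mul_le_Lp_mul_Lq_of_nonneg hpq
      (f := fun s => b - s) (g := fun s => ‖φ'' s‖)
      (μ := volume.restrict (Set.Ioc a b))
      ?_ (Filter.Eventually.of_forall fun s => norm_nonneg _) hf2 hg2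
    · convert this using 3 <;> norm_num
    · filter_upwards [ae_restrict_mem measurableSet_Ioc] with s hs
      simp only [Pi.zero_apply]
      linarith [hs.2]
  have hfsq : (∫ s in a..b, (b - s) ^ 2) = (b - a) ^ 3 / 3 := by
    rw [intervalIntegral.integral_comp_sub_left (fun u => u ^ 2) b]
    simp [integral_pow]
    norm_num
  have hY : 0 ≤ ∫ s in a..b, ‖φ'' s‖ ^ 2 := by
    rw [integral_of_le hab]
    exact integral_nonneg fun s => sq_nonneg _
  have hX : (0:ℝ) ≤ (b - a) ^ 3 / 3 := div_nonneg (pow_nonneg (by linarith) 3) (by norm_num)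
  rw [hfsq] at hCS
  have hA : (((b - a) ^ 3 / 3) ^ ((1:ℝ)/2)) ^ 2 = (b - a) ^ 3 / 3 := by
    rw [← Real.rpow_natCast (((b - a) ^ 3 / 3) ^ ((1:ℝ)/2)) 2, ← Real.rpow_mul hX]
    norm_num
  have hB : ((∫ s in a..b, ‖φ'' s‖ ^ 2) ^ ((1:ℝ)/2)) ^ 2 = ∫ s in a..b, ‖φ'' s‖ ^ 2 := by
    rw [← Real.rpow_natCast ((∫ s in a..b, ‖φ'' s‖ ^ 2) ^ ((1:ℝ)/2)) 2,
      ← Real.rpow_mul hY]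
    norm_num
  have h1 : ‖R‖ ≤ ((b - a) ^ 3 / 3) ^ ((1:ℝ)/2) * (∫ s in a..b, ‖φ'' s‖ ^ 2) ^ ((1:ℝ)/2) :=
    hnorm.trans hCS
  nlinarith [norm_nonneg R, Real.rpow_nonneg hX ((1:ℝ)/2), Real.rpow_nonneg hY ((1:ℝ)/2)]

/-- The forward difference quotient approximates the derivative at
the left endpoint with first order in `τ`, in the discrete `L²`-in-time norm
(cf. estimate \eqref{edts2}). -/
theorem discrete_time_derivative_forward_error_bound
    {E : Type*} [NormedAddCommGroup E] [InnerProductSpace ℝ E] [CompleteSpace E]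
    (T τ : ℝ) (hT : 0 < T) (hτ : 0 < τ) (N : ℕ) (hNT : ((N : ℝ) + 1) * τ ≤ T)
    (φ φ' φ'' : ℝ → E)
    (hderiv : ∀ t ∈ Set.Icc (0 : ℝ) T, HasDerivAt φ (φ' t) t)
    (hderiv2 : ∀ t ∈ Set.Icc (0 : ℝ) T, HasDerivAt φ' (φ'' t) t)
    (hint : IntegrableOn φ'' (Set.Icc (0 : ℝ) T))
    (hint2 : IntegrableOn (fun t => ‖φ'' t‖ ^ 2) (Set.Icc (0 : ℝ) T)) :
    τ * ∑ k ∈ Finset.Icc 1 N,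
        ‖τ⁻¹ • (φ (((k : ℝ) + 1) * τ) - φ ((k : ℝ) * τ)) - φ' ((k : ℝ) * τ)‖ ^ 2
      ≤ τ ^ 2 / 3 * ∫ t in (0 : ℝ)..T, ‖φ'' t‖ ^ 2 := by
  -- subintervals lie in [0, T]
  have hsub : ∀ k ∈ Finset.Icc 1 N,
      Set.Icc ((k : ℝ) * τ) (((k : ℝ) + 1) * τ) ⊆ Set.Icc (0 : ℝ) T := by
    intro k hk
    obtain ⟨hk1, hkN⟩ := Finset.mem_Icc.mp hk
    apply Set.Icc_subset_Icc
    · positivity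
    · have : ((k : ℝ) + 1) ≤ (N : ℝ) + 1 := by
        have := (Nat.cast_le (α := ℝ)).mpr hkN; linarith
      nlinarith
  -- per-term bound
  have hterm : ∀ k ∈ Finset.Icc 1 N,
      ‖τ⁻¹ • (φ (((k : ℝ) + 1) * τ) - φ ((k : ℝ) * τ)) - φ' ((k : ℝ) * τ)‖ ^ 2
        ≤ τ / 3 * ∫ t in ((k : ℝ) * τ)..(((k : ℝ) + 1) * τ), ‖φ'' t‖ ^ 2 := by
    intro k hk
    set a := (k : ℝ) * τ
    set b := ((k : ℝ) + 1) * τ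
    have hab : a ≤ b := by simp only [a, b]; nlinarith
    have hs := hsub k hk
    have hkey := key_taylor a b hab φ φ' φ''
      (fun t ht => hderiv t (hs ht)) (fun t ht => hderiv2 t (hs ht))
      (hint.mono_set hs) (hint2.mono_set hs)
    have hba : b - a = τ := by simp only [a, b]; ring
    rw [hba] at hkey
    have hrw : τ⁻¹ • (φ b - φ a) - φ' a = τ⁻¹ • (φ b - φ a - τ • φ' a) := by
      simp [smul_sub, smul_smul, inv_mul_cancel₀ hτ.ne']
    rw [hrw, norm_smul, Real.norm_eq_abs, abs_of_pos (inv_pos.mpr hτ), mul_pow]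
    calc τ⁻¹ ^ 2 * ‖φ b - φ a - τ • φ' a‖ ^ 2
        ≤ τ⁻¹ ^ 2 * (τ ^ 3 / 3 * ∫ t in a..b, ‖φ'' t‖ ^ 2) := by
          apply mul_le_mul_of_nonneg_left hkey (by positivity)
      _ = τ / 3 * ∫ t in a..b, ‖φ'' t‖ ^ 2 := by
          field_simp
  -- sum of integrals over adjacent intervals
  have hIsum : ∑ k ∈ Finset.Icc 1 N,
      (∫ t in ((k : ℝ) * τ)..(((k : ℝ) + 1) * τ), ‖φ'' t‖ ^ 2)
      ≤ ∫ t in (0:ℝ)..T, ‖φ'' t‖ ^ 2 := by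
    have hiiT : IntervalIntegrable (fun t => ‖φ'' t‖ ^ 2) volume 0 T := by
      rw [intervalIntegrable_iff_integrableOn_Ioc_of_le hT.le]
      exact hint2.mono_set Set.Ioc_subset_Icc_self
    have hadj : ∑ k ∈ Finset.Ico 1 (N + 1),
        (∫ t in ((k : ℝ) * τ)..((↑(k + 1) : ℝ) * τ), ‖φ'' t‖ ^ 2)
        = ∫ t in ((1:ℕ) : ℝ) * τ..((N + 1 : ℕ) : ℝ) * τ, ‖φ'' t‖ ^ 2 := by
      apply intervalIntegral.sum_integral_adjacent_intervals_Ico (Nat.le_add_left 1 N)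
      intro k hk
      apply hiiT.mono_set
      rw [Set.uIcc_of_le, Set.uIcc_of_le hT.le]
      · apply Set.Icc_subset_Icc
        · positivity
        · have hk2 : (k : ℝ) + 1 ≤ (N : ℝ) + 1 := by
            have : k + 1 ≤ N + 1 := Nat.succ_le_of_lt hk.2
            have := (Nat.cast_le (α := ℝ)).mpr this; push_cast at this ⊢; linarith
          push_cast
          nlinarith
      · push_cast; nlinarith [Nat.cast_nonneg (α := ℝ) k]
    rw [Finset.Ico_add_one_right_eq_Icc] at hadj
    have hconv : ∑ k ∈ Finset.Icc 1 N,
        (∫ t in ((k : ℝ) * τ)..(((k : ℝ) + 1) * τ), ‖φ'' t‖ ^ 2)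
        = ∫ t in ((1:ℕ) : ℝ) * τ..((N + 1 : ℕ) : ℝ) * τ, ‖φ'' t‖ ^ 2 := by
      rw [← hadj]
      apply Finset.sum_congr rfl
      intro k _
      push_cast
      ring_nf
    rw [hconv]
    apply intervalIntegral.integral_mono_interval (by positivity) (by push_cast; nlinarith)
      (by push_cast; linarith) ?_ hiiT
    filter_upwards with s
    simp only [Pi.zero_apply]
    positivity
  -- combine
  calc τ * ∑ k ∈ Finset.Icc 1 N,
        ‖τ⁻¹ • (φ (((k : ℝ) + 1) * τ) - φ ((k : ℝ) * τ)) - φ' ((k : ℝ) * τ)‖ ^ 2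
      ≤ τ * ∑ k ∈ Finset.Icc 1 N,
        (τ / 3 * ∫ t in ((k : ℝ) * τ)..(((k : ℝ) + 1) * τ), ‖φ'' t‖ ^ 2) := by
        apply mul_le_mul_of_nonneg_left (Finset.sum_le_sum hterm) hτ.le
    _ = τ ^ 2 / 3 * ∑ k ∈ Finset.Icc 1 N,
        (∫ t in ((k : ℝ) * τ)..(((k : ℝ) + 1) * τ), ‖φ'' t‖ ^ 2) := by
        rw [← Finset.mul_sum]; ring
    _ ≤ τ ^ 2 / 3 * ∫ t in (0 : ℝ)..T, ‖φ'' t‖ ^ 2 := by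
        apply mul_le_mul_of_nonneg_left hIsum (by positivity)
end

section
/- Let η : ℝ → ℝ be Lebesgue measurable with η(x₁) > 0 for every x₁ ∈ Σ, and let g : ℝ² → ℝ be Borel measurable and integrable on the subgraph domain Ω_η. Then the function (x̂₁,x̂₂) ↦ g(x̂₁, η(x̂₁)·x̂₂)·η(x̂₁) is integrable on Ω̂ and ∫_{Ω_η} g dλ² = ∫_{Ω̂} g(x̂₁, η(x̂₁)·x̂₂)·η(x̂₁) dλ²(x̂₁,x̂₂). -/
open MeasureTheory

/-- The subgraph domain `Ω_η = {(x₁,x₂) : x₁ ∈ (0,L₁), 0 < x₂ < η(x₁)}`. -/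
def subgraph (L₁ : ℝ) (η : ℝ → ℝ) : Set (ℝ × ℝ) :=
  {p : ℝ × ℝ | p.1 ∈ Set.Ioo 0 L₁ ∧ p.2 ∈ Set.Ioo 0 (η p.1)}

/-- The reference domain `Ω̂ = (0,L₁) × (0,1)`. -/
def refDomain (L₁ : ℝ) : Set (ℝ × ℝ) := Set.Ioo 0 L₁ ×ˢ Set.Ioo (0 : ℝ) 1

/-!
The ALE map pushes the measure `η(x̂₁) dx̂` on `Ω̂` forward to Lebesgue measure on `Ω_η`.
By Tonelli this is checked fibrewise: over `x̂₁ ∈ Σ` it is the one-dimensional scaling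
`x̂₂ ↦ η(x̂₁) x̂₂` of `(0,1)` onto `(0, η(x̂₁))`. The claims about `g` are the transfer of
integrability and of integrals along this push-forward.
-/

open Set ENNReal

def aleMap (η : ℝ → ℝ) (xh : ℝ × ℝ) : ℝ × ℝ := (xh.1, η xh.1 * xh.2)

theorem measurable_ofReal_comp_fst {η : ℝ → ℝ} (hη : Measurable η) :
    Measurable fun xh : ℝ × ℝ ↦ ENNReal.ofReal (η xh.1) :=
  (hη.comp measurable_fst).ennreal_ofReal

@[fun_prop]
theorem measurable_aleMap {η : ℝ → ℝ} (hη : Measurable η) : Measurable (aleMap η) :=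
  measurable_fst.prodMk ((hη.comp measurable_fst).mul measurable_snd)

theorem subgraph_eq_regionBetween (L₁ : ℝ) (η : ℝ → ℝ) :
    subgraph L₁ η = regionBetween 0 η (Ioo 0 L₁) := rfl

theorem measurableSet_refDomain (L₁ : ℝ) : MeasurableSet (refDomain L₁) :=
  measurableSet_Ioo.prod measurableSet_Ioo

theorem setLIntegral_Ioo_zero_eq_setLIntegral_Ioo_zero_one {c : ℝ} (hc : 0 < c)
    (f : ℝ → ℝ≥0∞) :
    ∫⁻ y in Ioo 0 c, f y = ∫⁻ t in Ioo 0 1, ENNReal.ofReal c * f (c * t) := by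
  have hderiv : ∀ t ∈ Ioo (0 : ℝ) 1, HasDerivWithinAt (c * ·) c (Ioo 0 1) t := fun t _ ↦ by
    simpa using ((hasDerivAt_id t).const_mul c).hasDerivWithinAt
  have hinj : InjOn (c * ·) (Ioo (0 : ℝ) 1) := fun _ _ _ _ h ↦ mul_left_cancel₀ hc.ne' h
  have himage : (c * ·) '' Ioo 0 1 = Ioo 0 c := by
    rw [image_mul_left_Ioo hc, mul_zero, mul_one]
  rw [← himage, lintegral_image_eq_lintegral_abs_deriv_mul measurableSet_Ioo hderiv hinj,
    abs_of_pos hc]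

theorem setLIntegral_regionBetween {α : Type*} [MeasurableSpace α] {μ : Measure α} [SFinite μ]
    {f g : α → ℝ} {s : Set α} (hf : Measurable f) (hg : Measurable g) (hs : MeasurableSet s)
    {F : α × ℝ → ℝ≥0∞} (hF : Measurable F) :
    ∫⁻ p in regionBetween f g s, F p ∂μ.prod volume
      = ∫⁻ x in s, ∫⁻ y in Ioo (f x) (g x), F (x, y) ∂volume ∂μ := by
  have hslice : ∀ x y, (regionBetween f g s).indicator F (x, y)
      = s.indicator (fun x ↦ (Ioo (f x) (g x)).indicator (fun y ↦ F (x, y)) y) x := by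
    intro x y
    by_cases hx : x ∈ s <;> simp [indicator, regionBetween, hx]
  rw [← lintegral_indicator (measurableSet_regionBetween hf hg hs),
    lintegral_prod _ (hF.indicator (measurableSet_regionBetween hf hg hs)).aemeasurable,
    ← lintegral_indicator hs]
  refine lintegral_congr fun x ↦ ?_
  simp only [hslice]
  by_cases hx : x ∈ s
  · simp [hx, lintegral_indicator measurableSet_Ioo]
  · simp [hx]

section

variable {L₁ : ℝ} {η : ℝ → ℝ}

theorem lintegral_subgraph_eq_lintegral_refDomain (hη : Measurable η)
    (hpos : ∀ x₁ ∈ Ioo (0 : ℝ) L₁, 0 < η x₁) {f : ℝ × ℝ → ℝ≥0∞} (hf : Measurable f) :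
    ∫⁻ x in subgraph L₁ η, f x
      = ∫⁻ xh in refDomain L₁, ENNReal.ofReal (η xh.1) * f (aleMap η xh) := by
  rw [subgraph_eq_regionBetween, refDomain, Measure.volume_eq_prod,
    setLIntegral_regionBetween measurable_zero hη measurableSet_Ioo hf,
    setLIntegral_prod _ (by fun_prop)]
  refine setLIntegral_congr_fun measurableSet_Ioo fun x₁ hx₁ ↦ ?_
  exact setLIntegral_Ioo_zero_eq_setLIntegral_Ioo_zero_one (hpos x₁ hx₁) _

theorem map_aleMap_withDensity (hη : Measurable η) (hpos : ∀ x₁ ∈ Ioo (0 : ℝ) L₁, 0 < η x₁) :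
    ((volume.restrict (refDomain L₁)).withDensity fun xh ↦ ENNReal.ofReal (η xh.1)).map
      (aleMap η) = volume.restrict (subgraph L₁ η) := by
  refine Measure.ext_of_lintegral _ fun f hf ↦ ?_
  rw [lintegral_map hf (measurable_aleMap hη),
    lintegral_withDensity_eq_lintegral_mul _ (measurable_ofReal_comp_fst hη)
      (hf.fun_comp (measurable_aleMap hη)),
    lintegral_subgraph_eq_lintegral_refDomain hη hpos hf]
  rfl

end

theorem integral_subgraph_eq_integral_refDomain_general
    (L₁ : ℝ)
    (η : ℝ → ℝ) (hη : Measurable η) (hpos : ∀ x₁ ∈ Set.Ioo (0 : ℝ) L₁, 0 < η x₁)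
    (g : ℝ × ℝ → ℝ)
    (hint : IntegrableOn g (subgraph L₁ η)) :
    IntegrableOn (fun xh : ℝ × ℝ => g (xh.1, η xh.1 * xh.2) * η xh.1) (refDomain L₁) ∧
    ∫ x in subgraph L₁ η, g x
      = ∫ xh in refDomain L₁, g (xh.1, η xh.1 * xh.2) * η xh.1 := by
  set ρ : ℝ × ℝ → ℝ≥0∞ := fun xh ↦ ENNReal.ofReal (η xh.1)
  have hρ : Measurable ρ := measurable_ofReal_comp_fst hη
  have hρ_lt_top : ∀ᵐ xh ∂volume.restrict (refDomain L₁), ρ xh < ∞ :=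
    ae_of_all _ fun _ ↦ ofReal_lt_top
  have hdensity : EqOn (fun xh ↦ (ρ xh).toReal • g (aleMap η xh))
      (fun xh ↦ g (xh.1, η xh.1 * xh.2) * η xh.1) (refDomain L₁) := fun xh hxh ↦ by
    simp [ρ, aleMap, toReal_ofReal (hpos _ hxh.1).le, mul_comm]
  have hμ := map_aleMap_withDensity hη hpos
  have hA := (measurable_aleMap hη).aemeasurable
    (μ := (volume.restrict (refDomain L₁)).withDensity ρ)
  rw [IntegrableOn, ← hμ] at hint
  have hgm := hint.aestronglyMeasurable
  constructor
  · refine IntegrableOn.congr_fun ?_ hdensity (measurableSet_refDomain L₁)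
    exact (integrable_withDensity_iff_integrable_smul' hρ hρ_lt_top).1
      ((integrable_map_measure hgm hA).1 hint)
  · rw [← hμ, integral_map hA hgm,
      integral_withDensity_eq_integral_toReal_smul hρ hρ_lt_top]
    exact setIntegral_congr_fun (measurableSet_refDomain L₁) hdensity

/-- Change of variables via the ALE map `A_η(xh₁,xh₂) = (xh₁, η(xh₁)xh₂)`
(whose Jacobian determinant is `η(xh₁)`): the transported integrand is integrable on
the reference domain and the integrals agree (cf. the Piola transformation
`dx = η dxh` in \eqref{Piola}). -/
theorem integral_subgraph_eq_integral_refDomain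
    (L₁ : ℝ) (hL : 0 < L₁)
    (η : ℝ → ℝ) (hη : Measurable η) (hpos : ∀ x₁ ∈ Set.Ioo (0 : ℝ) L₁, 0 < η x₁)
    (g : ℝ × ℝ → ℝ) (hg : Measurable g)
    (hint : IntegrableOn g (subgraph L₁ η)) :
    IntegrableOn (fun xh : ℝ × ℝ => g (xh.1, η xh.1 * xh.2) * η xh.1) (refDomain L₁) ∧
    ∫ x in subgraph L₁ η, g x
      = ∫ xh in refDomain L₁, g (xh.1, η xh.1 * xh.2) * η xh.1 :=
  integral_subgraph_eq_integral_refDomain_general L₁ η hη hpos g hint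
end

section
/- Let η : ℝ × ℝ → ℝ be continuously differentiable with η(t,x₁) > 0 for all t ∈ ℝ and x₁ ∈ [0,L₁], let u : ℝ × ℝ² → ℝ² be continuously differentiable, and let φ : ℝ² → ℝ² be continuous. Fix t ∈ ℝ and set û(t,x̂) = u(t, A_η(t,x̂)). Then ∫_{Ω_{η(t)}} [ ∂_t u(t,x) + (w(t,x)·∇)u(t,x) + (∂_t η(t,x₁)/(2·η(t,x₁)))·u(t,x) ] · φ(x) dλ²(x) = ∫_{Ω̂} [ η(t,x̂₁)·∂_t û(t,x̂) + (1/2)·∂_t η(t,x̂₁)·û(t,x̂) ] · φ(A_η(t,x̂)) dλ²(x̂), where ((w·∇)u)_i = Σ_j w_j ∂_{x_j} u_i and ∂_t û denotes the partial derivative of û in its time variable. -/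
open MeasureTheory

/-- Euclidean dot product on `ℝ²`. -/
def dot2 (a b : ℝ × ℝ) : ℝ := a.1 * b.1 + a.2 * b.2

lemma det2 (L : (ℝ × ℝ) →ₗ[ℝ] (ℝ × ℝ)) :
    L.det = (L (1,0)).1 * (L (0,1)).2 - (L (0,1)).1 * (L (1,0)).2 := by
  rw [← LinearMap.det_toMatrix (Module.Basis.finTwoProd ℝ), Matrix.det_fin_two]
  simp [LinearMap.toMatrix_apply, Module.Basis.coe_finTwoProd_repr]

lemma dot2_smul (r : ℝ) (a b : ℝ × ℝ) : dot2 (r • a) b = r * dot2 a b := by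
  simp [dot2]; ring

/-- Transformation of the material time-derivative term onto the
reference domain (cf. the first identity in the proof of Lemma \ref{Lwfref}):
`∫_{Ω_{η(t)}} (∂ₜu + (w·∇)u + (∂ₜη/(2η))u)·φ dx
  = ∫_{Ω̂} (η ∂ₜû + ½ ∂ₜη û)·φ∘A_η dx̂`,
where `w(t,x) = (0, x₂ ∂ₜη(t,x₁)/η(t,x₁))` and `û(t,x̂) = u(t, A_η(t,x̂))`. -/
theorem material_derivative_term_on_reference_domain
    (L₁ : ℝ) (hL : 0 < L₁)
    (η : ℝ × ℝ → ℝ) (hη : ContDiff ℝ 1 η)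
    (hpos : ∀ (t : ℝ), ∀ x₁ ∈ Set.Icc (0 : ℝ) L₁, 0 < η (t, x₁))
    (u : ℝ × (ℝ × ℝ) → ℝ × ℝ) (hu : ContDiff ℝ 1 u)
    (φ : ℝ × ℝ → ℝ × ℝ) (hφ : Continuous φ) (t : ℝ) :
    (∫ x in subgraph L₁ (fun x₁ => η (t, x₁)),
        dot2
          (deriv (fun s => u (s, x)) t
            + fderiv ℝ (fun y => u (t, y)) x
                ((0 : ℝ), x.2 * deriv (fun s => η (s, x.1)) t / η (t, x.1))
            + (deriv (fun s => η (s, x.1)) t / (2 * η (t, x.1))) • u (t, x))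
          (φ x))
      = ∫ xh in refDomain L₁,
          dot2
            (η (t, xh.1) • deriv (fun s => u (s, (xh.1, η (s, xh.1) * xh.2))) t
              + ((1 / 2) * deriv (fun s => η (s, xh.1)) t)
                  • u (t, (xh.1, η (t, xh.1) * xh.2)))
            (φ (xh.1, η (t, xh.1) * xh.2)) := by
  have hηd : Differentiable ℝ η := hη.differentiable one_ne_zero
  have hud : Differentiable ℝ u := hu.differentiable one_ne_zero
  set ηt : ℝ → ℝ := fun a => η (t, a) with hηt_def
  have hηt_diff : Differentiable ℝ ηt := by
    intro a
    exact (hηd (t, a)).comp a ((differentiableAt_const t).prodMk differentiableAt_id)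
  have hηtime : ∀ s a : ℝ, HasDerivAt (fun s' => η (s', a)) (deriv (fun s' => η (s', a)) s) s := by
    intro s a
    have : DifferentiableAt ℝ (fun s' => η (s', a)) s :=
      (hηd (s, a)).comp s (differentiableAt_id.prodMk (differentiableAt_const a))
    exact this.hasDerivAt
  set F : ℝ × ℝ → ℝ × ℝ := fun p => (p.1, η (t, p.1) * p.2) with hF_def
  set L : (ℝ × ℝ) → ((ℝ × ℝ) →L[ℝ] (ℝ × ℝ)) := fun p =>
    (ContinuousLinearMap.fst ℝ ℝ ℝ).prod
      (η (t, p.1) • ContinuousLinearMap.snd ℝ ℝ ℝ +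
        p.2 • (deriv ηt p.1 • ContinuousLinearMap.fst ℝ ℝ ℝ)) with hL_def
  have hFderiv : ∀ p : ℝ × ℝ, HasFDerivAt F (L p) p := by
    intro p
    have h1 : HasFDerivAt (fun q : ℝ × ℝ => ηt q.1)
        (deriv ηt p.1 • ContinuousLinearMap.fst ℝ ℝ ℝ) p :=
      HasDerivAt.comp_hasFDerivAt p (hηt_diff p.1).hasDerivAt hasFDerivAt_fst
    have h2 : HasFDerivAt (fun q : ℝ × ℝ => q.2) (ContinuousLinearMap.snd ℝ ℝ ℝ) p :=
      hasFDerivAt_snd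
    exact (hasFDerivAt_fst.prodMk (h1.mul h2))
  have hdet : ∀ p : ℝ × ℝ, (L p).det = η (t, p.1) := by
    intro p
    have h : (L p).det = LinearMap.det ((L p) : (ℝ × ℝ) →ₗ[ℝ] (ℝ × ℝ)) := rfl
    rw [h, det2]
    simp [hL_def]
  have hpos' : ∀ p : ℝ × ℝ, p ∈ refDomain L₁ → 0 < η (t, p.1) := by
    intro p hp
    exact hpos t p.1 ⟨le_of_lt hp.1.1, le_of_lt hp.1.2⟩
  have hinj : Set.InjOn F (refDomain L₁) := by
    intro p hp q hq h
    have h1 : p.1 = q.1 := (Prod.ext_iff.mp h).1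
    have h2 : η (t, p.1) * p.2 = η (t, q.1) * q.2 := (Prod.ext_iff.mp h).2
    rw [h1] at h2
    have hq0 := hpos' q hq
    have h3 : p.2 = q.2 := mul_left_cancel₀ (ne_of_gt hq0) h2
    exact Prod.ext h1 h3
  have himg : subgraph L₁ ηt = F '' refDomain L₁ := by
    ext ⟨a, b⟩
    constructor
    · rintro ⟨⟨ha0, haL⟩, ⟨hb0, hbη⟩⟩
      have hηa : 0 < η (t, a) := hpos t a ⟨le_of_lt ha0, le_of_lt haL⟩
      refine ⟨(a, b / η (t, a)), ⟨⟨ha0, haL⟩, ?_, ?_⟩, ?_⟩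
      · exact div_pos hb0 hηa
      · rw [div_lt_one hηa]; exact hbη
      · show (a, η (t, a) * (b / η (t, a))) = (a, b)
        rw [mul_div_cancel₀ b (ne_of_gt hηa)]
    · rintro ⟨⟨c, d⟩, ⟨⟨hc0, hcL⟩, ⟨hd0, hd1⟩⟩, h⟩
      have hηc : 0 < η (t, c) := hpos t c ⟨le_of_lt hc0, le_of_lt hcL⟩
      have h' : (c, η (t, c) * d) = (a, b) := h
      rw [← h']
      refine ⟨⟨hc0, hcL⟩, mul_pos hηc hd0, ?_⟩
      calc η (t, c) * d < η (t, c) * 1 := mul_lt_mul_of_pos_left hd1 hηc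
        _ = ηt c := by simp [hηt_def]
  have hmeas : MeasurableSet (refDomain L₁) :=
    measurableSet_Ioo.prod measurableSet_Ioo
  have hcov := integral_image_eq_integral_abs_det_fderiv_smul volume hmeas
    (fun p _ => (hFderiv p).hasFDerivWithinAt) hinj
    (fun x => dot2
        (deriv (fun s => u (s, x)) t
          + fderiv ℝ (fun y => u (t, y)) x
              ((0 : ℝ), x.2 * deriv (fun s => η (s, x.1)) t / η (t, x.1))
          + (deriv (fun s => η (s, x.1)) t / (2 * η (t, x.1))) • u (t, x))
        (φ x))
  rw [show subgraph L₁ (fun x₁ => η (t, x₁)) = F '' refDomain L₁ from himg, hcov]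
  refine setIntegral_congr_fun hmeas fun p hp => ?_
  have hηp : 0 < η (t, p.1) := hpos' p hp
  have hηne : η (t, p.1) ≠ 0 := ne_of_gt hηp
  have hFp : F p = (p.1, η (t, p.1) * p.2) := rfl
  rw [hdet p, abs_of_pos hηp, hFp]
  dsimp only
  set Du : (ℝ × (ℝ × ℝ)) →L[ℝ] (ℝ × ℝ) :=
    fderiv ℝ u (t, (p.1, η (t, p.1) * p.2)) with hDu_def
  set ηd : ℝ := deriv (fun s => η (s, p.1)) t with hηd_def
  set x : ℝ × ℝ := (p.1, η (t, p.1) * p.2) with hx_def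
  have hA : HasDerivAt (fun s => u (s, x)) (Du (1, (0, 0))) t := by
    have hγ : HasDerivAt (fun s : ℝ => (s, x)) ((1 : ℝ), ((0 : ℝ), (0 : ℝ))) t :=
      (hasDerivAt_id t).prodMk (hasDerivAt_const t x)
    exact (hud (t, x)).hasFDerivAt.comp_hasDerivAt t hγ
  have hB : HasFDerivAt (fun y => u (t, y))
      (Du.comp ((0 : (ℝ × ℝ) →L[ℝ] ℝ).prod (ContinuousLinearMap.id ℝ (ℝ × ℝ)))) x := by
    have hγ : HasFDerivAt (fun y : ℝ × ℝ => ((t : ℝ), y))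
        ((0 : (ℝ × ℝ) →L[ℝ] ℝ).prod (ContinuousLinearMap.id ℝ (ℝ × ℝ))) x :=
      (hasFDerivAt_const t x).prodMk (hasFDerivAt_id x)
    exact ((hud (t, x)).hasFDerivAt).comp x hγ
  have hU : HasDerivAt (fun s => u (s, (p.1, η (s, p.1) * p.2))) (Du (1, (0, ηd * p.2))) t := by
    have hin : HasDerivAt (fun s : ℝ => η (s, p.1) * p.2) (ηd * p.2) t :=
      (hηtime t p.1).mul_const p.2
    have hγ : HasDerivAt (fun s : ℝ => (s, (p.1, η (s, p.1) * p.2)))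
        ((1 : ℝ), ((0 : ℝ), ηd * p.2)) t :=
      (hasDerivAt_id t).prodMk ((hasDerivAt_const t p.1).prodMk hin)
    have hFu : HasFDerivAt u Du ((fun s : ℝ => (s, (p.1, η (s, p.1) * p.2))) t) :=
      (hud _).hasFDerivAt
    exact hFu.comp_hasDerivAt t hγ
  rw [hA.deriv, hB.fderiv, hU.deriv]
  have hBapp : (Du.comp ((0 : (ℝ × ℝ) →L[ℝ] ℝ).prod (ContinuousLinearMap.id ℝ (ℝ × ℝ))))
      ((0 : ℝ), x.2 * ηd / η (t, p.1)) = Du (0, (0, p.2 * ηd)) := by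
    have hh : x.2 * ηd / η (t, p.1) = p.2 * ηd := by
      rw [hx_def]; field_simp
    simp [hh]
  rw [hBapp]
  have hsum : Du (1, (0, 0)) + Du (0, (0, p.2 * ηd)) = Du (1, (0, ηd * p.2)) := by
    rw [← map_add]
    congr 1
    simp [Prod.ext_iff, mul_comm]
  have hvec : η (t, p.1) • (Du (1, (0, 0)) + Du (0, (0, p.2 * ηd))
        + (ηd / (2 * η (t, p.1))) • u (t, x))
      = η (t, p.1) • Du (1, (0, ηd * p.2)) + ((1 / 2) * ηd) • u (t, x) := by
    rw [smul_add, hsum, smul_smul]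
    congr 2
    field_simp
  rw [smul_eq_mul, ← dot2_smul, hvec]
end

section
/- (Reynolds transport theorem on moving subgraph domains.) Let η : ℝ × ℝ → ℝ be continuously differentiable with η(t,x₁) > 0 for all t ∈ ℝ and x₁ ∈ [0,L₁], and let v : ℝ × ℝ² → ℝ be continuously differentiable. Then for every t₀ ∈ ℝ, the function t ↦ ∫_{Ω_{η(t)}} v(t,x) dλ²(x) is differentiable at t₀ with derivative ∫_{Ω_{η(t₀)}} [ ∂_t v(t₀,x) + w(t₀,x)·∇_x v(t₀,x) + (∂_t η(t₀,x₁)/η(t₀,x₁))·v(t₀,x) ] dλ²(x). -/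
open MeasureTheory

lemma inner_slice (c : ℝ) (hc : 0 ≤ c) (g : ℝ → ℝ) :
    ∫ x₂ in Set.Ioo (0:ℝ) c, g x₂ = c * ∫ x₂ in Set.Ioo (0:ℝ) 1, g (c * x₂) := by
  rw [← MeasureTheory.integral_Ioc_eq_integral_Ioo, ← intervalIntegral.integral_of_le hc,
      ← MeasureTheory.integral_Ioc_eq_integral_Ioo, ← intervalIntegral.integral_of_le zero_le_one,
      intervalIntegral.mul_integral_comp_mul_left, mul_zero, mul_one]

lemma changeVar (L₁ : ℝ) (hL : 0 < L₁) (e : ℝ → ℝ) (he : Continuous e)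
    (hepos : ∀ x₁ ∈ Set.Icc (0:ℝ) L₁, 0 < e x₁)
    {M : ℝ} (hM : ∀ x₁ ∈ Set.Icc (0:ℝ) L₁, e x₁ ≤ M)
    (f : ℝ × ℝ → ℝ) (hf : ContinuousOn f (Set.Icc (0:ℝ) L₁ ×ˢ Set.Icc (0:ℝ) M)) :
    ∫ x in subgraph L₁ e, f x
      = ∫ x in Set.Ioo (0:ℝ) L₁ ×ˢ Set.Ioo (0:ℝ) 1, e x.1 * f (x.1, e x.1 * x.2) := by
  have hmeas : MeasurableSet (subgraph L₁ e) := by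
    have h : subgraph L₁ e = regionBetween (fun _ => (0:ℝ)) e (Set.Ioo 0 L₁) := rfl
    rw [h]
    exact measurableSet_regionBetween measurable_const he.measurable measurableSet_Ioo
  have hsub : subgraph L₁ e ⊆ Set.Icc 0 L₁ ×ˢ Set.Icc 0 M := by
    rintro ⟨a, b⟩ ⟨ha, hb⟩
    have ha' : a ∈ Set.Icc (0:ℝ) L₁ := ⟨ha.1.le, ha.2.le⟩
    exact ⟨ha', ⟨hb.1.le, hb.2.le.trans (hM a ha')⟩⟩
  have hint : IntegrableOn f (subgraph L₁ e) :=
    (hf.integrableOn_compact (isCompact_Icc.prod isCompact_Icc)).mono_set hsub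
  have hmaps : Set.MapsTo (fun x : ℝ × ℝ => (x.1, e x.1 * x.2))
      (Set.Icc 0 L₁ ×ˢ Set.Icc 0 1) (Set.Icc 0 L₁ ×ˢ Set.Icc 0 M) := by
    rintro ⟨a, b⟩ ⟨ha, hb⟩
    refine ⟨ha, ⟨mul_nonneg (hepos a ha).le hb.1, ?_⟩⟩
    calc e a * b ≤ e a * 1 := mul_le_mul_of_nonneg_left hb.2 (hepos a ha).le
      _ = e a := mul_one _
      _ ≤ M := hM a ha
  have hgcont : ContinuousOn (fun x : ℝ × ℝ => e x.1 * f (x.1, e x.1 * x.2))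
      (Set.Icc 0 L₁ ×ˢ Set.Icc 0 1) :=
    (he.comp continuous_fst).continuousOn.mul
      (hf.comp (continuous_fst.prodMk
        ((he.comp continuous_fst).mul continuous_snd)).continuousOn hmaps)
  have hgint : IntegrableOn (fun x : ℝ × ℝ => e x.1 * f (x.1, e x.1 * x.2))
      (Set.Ioo (0:ℝ) L₁ ×ˢ Set.Ioo (0:ℝ) 1) :=
    (hgcont.integrableOn_compact (isCompact_Icc.prod isCompact_Icc)).mono_set
      (Set.prod_mono Set.Ioo_subset_Icc_self Set.Ioo_subset_Icc_self)
  have hind : Integrable ((subgraph L₁ e).indicator f) ((volume : Measure ℝ).prod volume) :=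
    (integrable_indicator_iff hmeas).2 hint
  have hgint' : IntegrableOn (fun x : ℝ × ℝ => e x.1 * f (x.1, e x.1 * x.2))
      (Set.Ioo (0:ℝ) L₁ ×ˢ Set.Ioo (0:ℝ) 1) ((volume : Measure ℝ).prod volume) := hgint
  calc ∫ x in subgraph L₁ e, f x
      = ∫ x : ℝ × ℝ, (subgraph L₁ e).indicator f x := (integral_indicator hmeas).symm
    _ = ∫ x₁ : ℝ, ∫ x₂ : ℝ, (subgraph L₁ e).indicator f (x₁, x₂) := integral_prod _ hind
    _ = ∫ x₁ : ℝ, (Set.Ioo (0:ℝ) L₁).indicator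
          (fun x₁ => e x₁ * ∫ x₂ in Set.Ioo (0:ℝ) 1, f (x₁, e x₁ * x₂)) x₁ := by
        congr 1; funext x₁
        by_cases hx₁ : x₁ ∈ Set.Ioo (0:ℝ) L₁
        · rw [Set.indicator_of_mem hx₁]
          have h : (fun x₂ => (subgraph L₁ e).indicator f (x₁, x₂))
              = (Set.Ioo (0:ℝ) (e x₁)).indicator (fun x₂ => f (x₁, x₂)) := by
            funext x₂
            by_cases hx₂ : x₂ ∈ Set.Ioo 0 (e x₁)
            · have hmem : (x₁, x₂) ∈ subgraph L₁ e := ⟨hx₁, hx₂⟩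
              rw [Set.indicator_of_mem hmem f, Set.indicator_of_mem hx₂]
            · rw [Set.indicator_of_notMem (fun h => hx₂ h.2), Set.indicator_of_notMem hx₂]
          rw [h, integral_indicator measurableSet_Ioo,
            inner_slice (e x₁) (hepos x₁ (Set.Ioo_subset_Icc_self hx₁)).le (fun x₂ => f (x₁, x₂))]
        · rw [Set.indicator_of_notMem hx₁]
          have h : (fun x₂ => (subgraph L₁ e).indicator f (x₁, x₂)) = fun _ => 0 := by
            funext x₂; exact Set.indicator_of_notMem (fun h => hx₁ h.1) _
          rw [h, integral_zero]
    _ = ∫ x₁ in Set.Ioo (0:ℝ) L₁, e x₁ * ∫ x₂ in Set.Ioo (0:ℝ) 1, f (x₁, e x₁ * x₂) :=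
        integral_indicator measurableSet_Ioo
    _ = ∫ x₁ in Set.Ioo (0:ℝ) L₁, ∫ x₂ in Set.Ioo (0:ℝ) 1, e x₁ * f (x₁, e x₁ * x₂) := by
        refine setIntegral_congr_fun measurableSet_Ioo (fun x₁ _ => ?_)
        exact (integral_const_mul _ _).symm
    _ = ∫ x in Set.Ioo (0:ℝ) L₁ ×ˢ Set.Ioo (0:ℝ) 1, e x.1 * f (x.1, e x.1 * x.2) :=
        (setIntegral_prod _ hgint').symm

/-- Reynolds transport theorem \eqref{RT} on the moving subgraph
domains `Ω_{η(t)}`: the map `t ↦ ∫_{Ω_{η(t)}} v(t,·)` is differentiable, with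
derivative `∫_{Ω_{η(t₀)}} (∂ₜv + w·∇ₓv + (∂ₜη/η) v)`, where
`w(t,x) = (0, x₂ ∂ₜη(t,x₁)/η(t,x₁))` is the ALE domain velocity and
`∂ₜη/η = div w` is the Euler expansion \eqref{euler}. -/
theorem reynolds_transport_on_moving_subgraph
    (L₁ : ℝ) (hL : 0 < L₁)
    (η : ℝ × ℝ → ℝ) (hη : ContDiff ℝ 1 η)
    (hpos : ∀ (t : ℝ), ∀ x₁ ∈ Set.Icc (0 : ℝ) L₁, 0 < η (t, x₁))
    (v : ℝ × (ℝ × ℝ) → ℝ) (hv : ContDiff ℝ 1 v) (t₀ : ℝ) :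
    HasDerivAt (fun t => ∫ x in subgraph L₁ (fun x₁ => η (t, x₁)), v (t, x))
      (∫ x in subgraph L₁ (fun x₁ => η (t₀, x₁)),
        deriv (fun s => v (s, x)) t₀
          + fderiv ℝ (fun y => v (t₀, y)) x
              ((0 : ℝ), x.2 * deriv (fun s => η (s, x.1)) t₀ / η (t₀, x.1))
          + (deriv (fun s => η (s, x.1)) t₀ / η (t₀, x.1)) * v (t₀, x))
      t₀ := by
  have hηd : Differentiable ℝ η := hη.differentiable one_ne_zero
  have hvd : Differentiable ℝ v := hv.differentiable one_ne_zero
  have cη : Continuous (fderiv ℝ η) := hη.continuous_fderiv one_ne_zero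
  have cv : Continuous (fderiv ℝ v) := hv.continuous_fderiv one_ne_zero
  have hηc : Continuous η := hη.continuous
  have hvc : Continuous v := hv.continuous
  set Ω : Set (ℝ × ℝ) := Set.Ioo (0:ℝ) L₁ ×ˢ Set.Ioo (0:ℝ) 1 with hΩdef
  have hΩmeas : MeasurableSet Ω := measurableSet_Ioo.prod measurableSet_Ioo
  have hΩfin : volume Ω < ⊤ :=
    lt_of_le_of_lt
      (measure_mono (Set.prod_mono Set.Ioo_subset_Icc_self Set.Ioo_subset_Icc_self))
      (isCompact_Icc.prod isCompact_Icc).measure_lt_top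
  -- partial t-derivative of η
  have hA : ∀ (t a : ℝ), HasDerivAt (fun s => η (s, a)) (fderiv ℝ η (t, a) (1, 0)) t :=
    fun t a =>
      (hηd (t, a)).hasFDerivAt.comp_hasDerivAt t ((hasDerivAt_id t).prodMk (hasDerivAt_const t a))
  set F : ℝ → ℝ × ℝ → ℝ := fun t x => η (t, x.1) * v (t, (x.1, η (t, x.1) * x.2)) with hFdef
  set F' : ℝ → ℝ × ℝ → ℝ := fun t x =>
    fderiv ℝ η (t, x.1) (1, 0) * v (t, (x.1, η (t, x.1) * x.2))
      + η (t, x.1) *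
        fderiv ℝ v (t, (x.1, η (t, x.1) * x.2)) (1, (0, fderiv ℝ η (t, x.1) (1, 0) * x.2))
    with hF'def
  have hB : ∀ (t : ℝ) (x : ℝ × ℝ), HasDerivAt (fun s => F s x) (F' t x) t := by
    intro t x
    have h1 := hA t x.1
    have hcurve : HasDerivAt (fun s : ℝ => ((s, (x.1, η (s, x.1) * x.2)) : ℝ × (ℝ × ℝ)))
        (1, (0, fderiv ℝ η (t, x.1) (1, 0) * x.2)) t :=
      (hasDerivAt_id t).prodMk ((hasDerivAt_const t x.1).prodMk (h1.mul_const x.2))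
    have h2 := (hvd _).hasFDerivAt.comp_hasDerivAt t hcurve
    exact h1.mul h2
  -- joint continuity of F'
  have m1 : Continuous fun p : ℝ × (ℝ × ℝ) => (p.1, p.2.1) :=
    continuous_fst.prodMk (continuous_fst.comp continuous_snd)
  have c1 : Continuous fun p : ℝ × (ℝ × ℝ) => fderiv ℝ η (p.1, p.2.1) (1, 0) :=
    (cη.comp m1).clm_apply continuous_const
  have mη : Continuous fun p : ℝ × (ℝ × ℝ) => η (p.1, p.2.1) := hηc.comp m1
  have m2 : Continuous fun p : ℝ × (ℝ × ℝ) => (p.1, (p.2.1, η (p.1, p.2.1) * p.2.2)) :=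
    continuous_fst.prodMk ((continuous_fst.comp continuous_snd).prodMk
      (mη.mul (continuous_snd.comp continuous_snd)))
  have cφ : Continuous fun p : ℝ × (ℝ × ℝ) => F' p.1 p.2 := by
    have cvφ : Continuous fun p : ℝ × (ℝ × ℝ) => v (p.1, (p.2.1, η (p.1, p.2.1) * p.2.2)) :=
      hvc.comp m2
    have c2 : Continuous fun p : ℝ × (ℝ × ℝ) =>
        fderiv ℝ v (p.1, (p.2.1, η (p.1, p.2.1) * p.2.2))
          (1, (0, fderiv ℝ η (p.1, p.2.1) (1, 0) * p.2.2)) :=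
      (cv.comp m2).clm_apply (continuous_const.prodMk
        (continuous_const.prodMk (c1.mul (continuous_snd.comp continuous_snd))))
    exact (c1.mul cvφ).add (mη.mul c2)
  have cFt : ∀ t : ℝ, Continuous (F t) := by
    intro t
    exact (hηc.comp (continuous_const.prodMk continuous_fst)).mul
      (hvc.comp (continuous_const.prodMk (continuous_fst.prodMk
        ((hηc.comp (continuous_const.prodMk continuous_fst)).mul continuous_snd))))
  -- bound on F' near t₀
  obtain ⟨C, hC⟩ := (isCompact_Icc (a := t₀ - 1) (b := t₀ + 1)).prod
    ((isCompact_Icc (a := (0:ℝ)) (b := L₁)).prod (isCompact_Icc (a := (0:ℝ)) (b := (1:ℝ)))) |>.exists_bound_of_continuousOn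
      (f := fun p : ℝ × (ℝ × ℝ) => F' p.1 p.2) cφ.continuousOn
  -- the parametric differentiation
  have main := hasDerivAt_integral_of_dominated_loc_of_deriv_le
      (μ := volume.restrict Ω) (F := F) (F' := F') (x₀ := t₀) (bound := fun _ => C)
      (Metric.ball_mem_nhds t₀ one_pos)
      (Filter.Eventually.of_forall fun t => (cFt t).aestronglyMeasurable)
      (((cFt t₀).continuousOn.integrableOn_compact (isCompact_Icc.prod isCompact_Icc)).mono_set
        (Set.prod_mono Set.Ioo_subset_Icc_self Set.Ioo_subset_Icc_self))
      ((cφ.comp (continuous_const.prodMk continuous_id)).aestronglyMeasurable)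
      ((ae_restrict_iff' hΩmeas).2 (Filter.Eventually.of_forall (by
        rintro ⟨a, b⟩ hx t ht
        have ht' : t ∈ Set.Icc (t₀ - 1) (t₀ + 1) := by
          have := Metric.mem_ball.1 ht
          rw [Real.dist_eq] at this
          have h2 := abs_lt.1 this
          constructor <;> linarith [h2.1, h2.2]
        exact hC (t, (a, b)) ⟨ht', ⟨Set.Ioo_subset_Icc_self hx.1, Set.Ioo_subset_Icc_self hx.2⟩⟩)))
      (integrableOn_const hΩfin.ne)
      (Filter.Eventually.of_forall fun x t _ => hB t x)
  obtain ⟨-, hG⟩ := main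
  -- bound for η (t, ·) on the slab
  have hbd : ∀ t : ℝ, ∃ M, ∀ x₁ ∈ Set.Icc (0:ℝ) L₁, η (t, x₁) ≤ M := by
    intro t
    obtain ⟨z, _, hz2⟩ := isCompact_Icc.exists_isMaxOn (Set.nonempty_Icc.2 hL.le)
      ((hηc.comp (continuous_const.prodMk continuous_id)).continuousOn
        (s := Set.Icc (0:ℝ) L₁))
    exact ⟨η (t, z), fun x₁ h => hz2 h⟩
  have key1 : (fun t => ∫ x in subgraph L₁ (fun x₁ => η (t, x₁)), v (t, x))
      = fun t => ∫ x in Ω, F t x := by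
    funext t
    obtain ⟨M, hM⟩ := hbd t
    exact changeVar L₁ hL (fun x₁ => η (t, x₁))
      (hηc.comp (continuous_const.prodMk continuous_id)) (hpos t) hM
      (fun y => v (t, y))
      ((hvc.comp (continuous_const.prodMk continuous_id)).continuousOn)
  -- rewrite of the claimed derivative integrand
  set D : ℝ × ℝ → ℝ := fun y =>
    deriv (fun s => v (s, y)) t₀
      + fderiv ℝ (fun y' => v (t₀, y')) y
          ((0 : ℝ), y.2 * deriv (fun s => η (s, y.1)) t₀ / η (t₀, y.1))
      + (deriv (fun s => η (s, y.1)) t₀ / η (t₀, y.1)) * v (t₀, y) with hDdef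
  have hd3 : ∀ (y : ℝ × ℝ) (u : ℝ × ℝ),
      fderiv ℝ (fun y' => v (t₀, y')) y u = fderiv ℝ v (t₀, y) ((0 : ℝ), u) := by
    intro y u
    have h := ((hvd (t₀, y)).hasFDerivAt.comp y
      ((hasFDerivAt_const t₀ y).prodMk (hasFDerivAt_id y))).fderiv
    have h2 : fderiv ℝ (fun y' => v (t₀, y')) y = fderiv ℝ (v ∘ Prod.mk t₀) y := rfl
    rw [h2, h]
    rfl
  have hDeq : D = fun y : ℝ × ℝ =>
      fderiv ℝ v (t₀, y) (1, ((0:ℝ), (0:ℝ)))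
        + fderiv ℝ v (t₀, y) ((0:ℝ), ((0:ℝ), y.2 * fderiv ℝ η (t₀, y.1) (1, 0) / η (t₀, y.1)))
        + fderiv ℝ η (t₀, y.1) (1, 0) / η (t₀, y.1) * v (t₀, y) := by
    funext y
    have hd1 : deriv (fun s => v (s, y)) t₀ = fderiv ℝ v (t₀, y) (1, ((0:ℝ), (0:ℝ))) :=
      ((hvd (t₀, y)).hasFDerivAt.comp_hasDerivAt t₀
        ((hasDerivAt_id t₀).prodMk (hasDerivAt_const t₀ y))).deriv
    have hd2 : deriv (fun s => η (s, y.1)) t₀ = fderiv ℝ η (t₀, y.1) (1, 0) := (hA t₀ y.1).deriv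
    simp only [hDdef, hd1, hd2, hd3]
  have hDcont : ∀ M : ℝ, ContinuousOn D (Set.Icc (0:ℝ) L₁ ×ˢ Set.Icc (0:ℝ) M) := by
    intro M
    rw [hDeq]
    set S := Set.Icc (0:ℝ) L₁ ×ˢ Set.Icc (0:ℝ) M with hS
    have hne : ∀ y ∈ S, η (t₀, y.1) ≠ 0 := fun y hy => (hpos t₀ y.1 hy.1).ne'
    have cη0 : Continuous fun y : ℝ × ℝ => η (t₀, y.1) :=
      hηc.comp (continuous_const.prodMk continuous_fst)
    have cc : Continuous fun y : ℝ × ℝ => fderiv ℝ η (t₀, y.1) (1, 0) :=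
      (cη.comp (continuous_const.prodMk continuous_fst)).clm_apply continuous_const
    have t1 : Continuous fun y : ℝ × ℝ => fderiv ℝ v (t₀, y) (1, ((0:ℝ), (0:ℝ))) :=
      (cv.comp (continuous_const.prodMk continuous_id)).clm_apply continuous_const
    have q : ContinuousOn (fun y : ℝ × ℝ =>
        y.2 * fderiv ℝ η (t₀, y.1) (1, 0) / η (t₀, y.1)) S :=
      (continuous_snd.mul cc).continuousOn.div cη0.continuousOn hne
    have t2 : ContinuousOn (fun y : ℝ × ℝ => fderiv ℝ v (t₀, y)
        ((0:ℝ), ((0:ℝ), y.2 * fderiv ℝ η (t₀, y.1) (1, 0) / η (t₀, y.1)))) S :=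
      (cv.comp (continuous_const.prodMk continuous_id)).continuousOn.clm_apply
        (continuousOn_const.prodMk (continuousOn_const.prodMk q))
    have t3 : ContinuousOn (fun y : ℝ × ℝ =>
        fderiv ℝ η (t₀, y.1) (1, 0) / η (t₀, y.1) * v (t₀, y)) S :=
      (cc.continuousOn.div cη0.continuousOn hne).mul
        (hvc.comp (continuous_const.prodMk continuous_id)).continuousOn
    exact (t1.continuousOn.add t2).add t3
  have key2 : (∫ x in subgraph L₁ (fun x₁ => η (t₀, x₁)), D x) = ∫ x in Ω, F' t₀ x := by
    obtain ⟨M, hM⟩ := hbd t₀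
    calc (∫ x in subgraph L₁ (fun x₁ => η (t₀, x₁)), D x)
        = ∫ x in Ω, η (t₀, x.1) * D (x.1, η (t₀, x.1) * x.2) :=
          changeVar L₁ hL (fun x₁ => η (t₀, x₁))
            (hηc.comp (continuous_const.prodMk continuous_id)) (hpos t₀) hM D (hDcont M)
      _ = ∫ x in Ω, F' t₀ x := by
          refine setIntegral_congr_fun hΩmeas (fun x hx => ?_)
          have ha : x.1 ∈ Set.Icc (0:ℝ) L₁ := Set.Ioo_subset_Icc_self hx.1
          have hh : 0 < η (t₀, x.1) := hpos t₀ x.1 ha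
          rw [hDeq]
          simp only []
          set h := η (t₀, x.1) with hhdef
          set c := fderiv ℝ η (t₀, x.1) (1, 0) with hcdef
          set p : ℝ × ℝ := (x.1, h * x.2) with hpdef
          have hp1 : p.1 = x.1 := rfl
          have hp2 : p.2 = h * x.2 := rfl
          have hsimp : p.2 * fderiv ℝ η (t₀, p.1) (1, 0) / η (t₀, p.1) = c * x.2 := by
            rw [hp1, hp2, ← hhdef, ← hcdef]
            field_simp
          have hvecadd : ((1:ℝ), ((0:ℝ), (0:ℝ))) + ((0:ℝ), ((0:ℝ), c * x.2))
              = ((1:ℝ), ((0:ℝ), c * x.2)) := by simp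
          have hadd : fderiv ℝ v (t₀, p) (1, ((0:ℝ), c * x.2))
              = fderiv ℝ v (t₀, p) (1, ((0:ℝ), (0:ℝ)))
                + fderiv ℝ v (t₀, p) ((0:ℝ), ((0:ℝ), c * x.2)) := by
            rw [← map_add, hvecadd]
          show h * (fderiv ℝ v (t₀, p) (1, ((0:ℝ), (0:ℝ)))
              + fderiv ℝ v (t₀, p) ((0:ℝ), ((0:ℝ), p.2 * fderiv ℝ η (t₀, p.1) (1, 0) / η (t₀, p.1)))
              + fderiv ℝ η (t₀, p.1) (1, 0) / η (t₀, p.1) * v (t₀, p))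
            = c * v (t₀, p) + h * fderiv ℝ v (t₀, p) (1, ((0:ℝ), c * x.2))
          rw [hsimp, hadd, hp1, ← hhdef, ← hcdef]
          field_simp
          ring
  rw [key1, key2]
  exact hG
end

section
/- (Discrete Reynolds transport.) Let η₀, η₁ : ℝ → ℝ be continuous with η₀ > 0 and η₁ > 0 on [0,L₁], let τ > 0, and let v₀, v₁ : ℝ² → ℝ be Borel measurable with v₀ integrable on Ω_{η₀} and v₁ integrable on Ω_{η₁}. Define X : Ω_{η₁} → Ω_{η₀} by X(x₁,x₂) = (x₁, η₀(x₁)·x₂/η₁(x₁)). Then the right-hand side below is a finite integral and (1/τ)·( ∫_{Ω_{η₁}} v₁ dλ² − ∫_{Ω_{η₀}} v₀ dλ² ) = ∫_{Ω_{η₁}} [ (v₁(x) − v₀(X(x)))/τ + ((η₁(x₁) − η₀(x₁))/(τ·η₁(x₁)))·v₀(X(x)) ] dλ²(x). -/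
open MeasureTheory

section Aux

open Set Pointwise

lemma oneD_integral (g : ℝ → ℝ) {a b : ℝ} (ha : 0 < a) (hb : 0 < b) :
    ∫ y in Ioo (0:ℝ) b, (a / b) * g (a / b * y) = ∫ y in Ioo (0:ℝ) a, g y := by
  have hc : 0 < a / b := div_pos ha hb
  have hset : (a / b) • Ioo (0:ℝ) b = Ioo (0:ℝ) a := by
    rw [LinearOrderedField.smul_Ioo hc, mul_zero, div_mul_cancel₀ _ hb.ne']
  have h1 : ∫ y in Ioo (0:ℝ) b, g ((a / b) • y)
      = ((a / b) ^ (Module.finrank ℝ ℝ))⁻¹ • ∫ y in (a / b) • Ioo (0:ℝ) b, g y :=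
    Measure.setIntegral_comp_smul_of_pos volume g _ hc
  simp only [Module.finrank_self, pow_one, smul_eq_mul, hset] at h1
  rw [integral_const_mul, h1, ← mul_assoc, mul_inv_cancel₀ hc.ne', one_mul]

lemma oneD_mem_iff {a b : ℝ} (hb : 0 < b) (hc : 0 < a / b) (y : ℝ) :
    a / b * y ∈ Ioo (0:ℝ) a ↔ y ∈ Ioo (0:ℝ) b := by
  have hab : a / b * b = a := div_mul_cancel₀ _ hb.ne'
  constructor
  · rintro ⟨h1, h2⟩
    have hy : 0 < y := (mul_pos_iff_of_pos_left hc).1 h1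
    refine ⟨hy, ?_⟩
    have h3 : a / b * y < a / b * b := by rwa [hab]
    exact (mul_lt_mul_iff_right₀ hc).1 h3
  · rintro ⟨h1, h2⟩
    exact ⟨mul_pos hc h1, by calc a / b * y < a / b * b := (mul_lt_mul_iff_right₀ hc).2 h2
      _ = a := hab⟩

lemma oneD_integrable (g : ℝ → ℝ) {a b : ℝ} (ha : 0 < a) (hb : 0 < b)
    (hg : IntegrableOn g (Ioo (0:ℝ) a)) :
    IntegrableOn (fun y => (a / b) * g (a / b * y)) (Ioo (0:ℝ) b) := by
  have hc : 0 < a / b := div_pos ha hb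
  have key : (fun y : ℝ => (Ioo (0:ℝ) a).indicator g (a / b * y))
      = (Ioo (0:ℝ) b).indicator (fun y => g (a / b * y)) := by
    ext y
    by_cases h : y ∈ Ioo (0:ℝ) b
    · rw [Set.indicator_of_mem h, Set.indicator_of_mem ((oneD_mem_iff hb hc y).2 h)]
    · rw [Set.indicator_of_notMem h,
        Set.indicator_of_notMem (fun hm => h ((oneD_mem_iff hb hc y).1 hm))]
  have h2 : Integrable ((Ioo (0:ℝ) a).indicator g) volume :=
    (integrable_indicator_iff measurableSet_Ioo).2 hg
  have h3 : Integrable (fun y : ℝ => (Ioo (0:ℝ) a).indicator g (a / b * y)) volume :=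
    h2.comp_mul_left' hc.ne'
  rw [key] at h3
  exact ((integrable_indicator_iff measurableSet_Ioo).1 h3).const_mul _

lemma subgraph_isOpen {L₁ : ℝ} {η : ℝ → ℝ} (hη : Continuous η) : IsOpen (subgraph L₁ η) := by
  have h : subgraph L₁ η = ({p : ℝ × ℝ | 0 < p.1} ∩ {p | p.1 < L₁}) ∩
      ({p : ℝ × ℝ | 0 < p.2} ∩ {p | p.2 < η p.1}) := by
    ext p; simp [subgraph, Set.mem_Ioo, and_assoc]
  rw [h]
  exact (((isOpen_lt continuous_const continuous_fst).inter
      (isOpen_lt continuous_fst continuous_const)).inter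
    ((isOpen_lt continuous_const continuous_snd).inter
      (isOpen_lt continuous_snd (hη.comp continuous_fst))))

lemma subgraph_fiber_indicator (L₁ : ℝ) (η : ℝ → ℝ) (f : ℝ × ℝ → ℝ) (x₁ : ℝ) :
    (fun y => (subgraph L₁ η).indicator f (x₁, y)) =
      if x₁ ∈ Ioo (0:ℝ) L₁ then (Ioo (0:ℝ) (η x₁)).indicator (fun y => f (x₁, y))
      else 0 := by
  classical
  ext y
  rcases Classical.em (x₁ ∈ Ioo (0:ℝ) L₁) with h | h
  · rw [if_pos h]
    by_cases hy : y ∈ Ioo (0:ℝ) (η x₁)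
    · rw [Set.indicator_of_mem hy, Set.indicator_of_mem (show (x₁, y) ∈ subgraph L₁ η from ⟨h, hy⟩)]
    · rw [Set.indicator_of_notMem hy,
        Set.indicator_of_notMem (fun hm => hy (hm.2 : y ∈ Ioo (0:ℝ) (η x₁)))]
  · rw [if_neg h, Set.indicator_of_notMem (fun hm => h hm.1)]
    rfl

end Aux

section Key

open Set

set_option maxHeartbeats 4000000 in
lemma key_cov (L₁ : ℝ) (η₀ η₁ : ℝ → ℝ)
    (hη₀ : Continuous η₀) (hη₁ : Continuous η₁)
    (hpos₀ : ∀ x₁ ∈ Set.Icc (0:ℝ) L₁, 0 < η₀ x₁)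
    (hpos₁ : ∀ x₁ ∈ Set.Icc (0:ℝ) L₁, 0 < η₁ x₁)
    (v₀ : ℝ × ℝ → ℝ) (hv₀m : Measurable v₀)
    (hv₀ : IntegrableOn v₀ (subgraph L₁ η₀)) :
    IntegrableOn (fun p : ℝ × ℝ => (η₀ p.1 / η₁ p.1) * v₀ (p.1, η₀ p.1 / η₁ p.1 * p.2))
      (subgraph L₁ η₁) ∧
    ∫ p in subgraph L₁ η₁, (η₀ p.1 / η₁ p.1) * v₀ (p.1, η₀ p.1 / η₁ p.1 * p.2)
      = ∫ p in subgraph L₁ η₀, v₀ p := by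
  set W : ℝ × ℝ → ℝ := fun p => (η₀ p.1 / η₁ p.1) * v₀ (p.1, η₀ p.1 / η₁ p.1 * p.2) with hW
  have hcm : Measurable fun p : ℝ × ℝ => η₀ p.1 / η₁ p.1 :=
    ((hη₀.comp continuous_fst).measurable).div ((hη₁.comp continuous_fst).measurable)
  have hWm : Measurable W :=
    hcm.mul (hv₀m.comp (measurable_fst.prodMk (hcm.mul measurable_snd)))
  have hs₀ : MeasurableSet (subgraph L₁ η₀) := (subgraph_isOpen hη₀).measurableSet
  have hs₁ : MeasurableSet (subgraph L₁ η₁) := (subgraph_isOpen hη₁).measurableSet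
  set F₀ : ℝ × ℝ → ℝ := (subgraph L₁ η₀).indicator v₀ with hF₀def
  set F₁ : ℝ × ℝ → ℝ := (subgraph L₁ η₁).indicator W with hF₁def
  have hF₀ : Integrable F₀ (volume : Measure (ℝ × ℝ)) :=
    (integrable_indicator_iff hs₀).2 hv₀
  have hF₀p : Integrable F₀ ((volume : Measure ℝ).prod volume) := by
    rwa [← Measure.volume_eq_prod]
  -- fiber descriptions
  have fib₀ : ∀ x₁ : ℝ, (fun y => F₀ (x₁, y)) =
      if x₁ ∈ Ioo (0:ℝ) L₁ then (Ioo (0:ℝ) (η₀ x₁)).indicator (fun y => v₀ (x₁, y)) else 0 :=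
    fun x₁ => subgraph_fiber_indicator L₁ η₀ v₀ x₁
  have fib₁ : ∀ x₁ : ℝ, (fun y => F₁ (x₁, y)) =
      if x₁ ∈ Ioo (0:ℝ) L₁ then (Ioo (0:ℝ) (η₁ x₁)).indicator (fun y => W (x₁, y)) else 0 :=
    fun x₁ => subgraph_fiber_indicator L₁ η₁ W x₁
  have hab : ∀ x₁ ∈ Ioo (0:ℝ) L₁, 0 < η₀ x₁ ∧ 0 < η₁ x₁ := fun x₁ hx => by
    have hx' : x₁ ∈ Icc (0:ℝ) L₁ := ⟨hx.1.le, hx.2.le⟩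
    exact ⟨hpos₀ x₁ hx', hpos₁ x₁ hx'⟩
  -- E2 : equality of fiber integrals, for all x₁
  have E2 : ∀ x₁ : ℝ, ∫ y, F₁ (x₁, y) = ∫ y, F₀ (x₁, y) := by
    intro x₁
    rcases Classical.em (x₁ ∈ Ioo (0:ℝ) L₁) with h | h
    · obtain ⟨ha, hb⟩ := hab x₁ h
      have e₁ : (fun y => F₁ (x₁, y)) = (Ioo (0:ℝ) (η₁ x₁)).indicator (fun y => W (x₁, y)) := by
        rw [fib₁ x₁, if_pos h]
      have e₀ : (fun y => F₀ (x₁, y)) = (Ioo (0:ℝ) (η₀ x₁)).indicator (fun y => v₀ (x₁, y)) := by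
        rw [fib₀ x₁, if_pos h]
      calc ∫ y, F₁ (x₁, y) = ∫ y in Ioo (0:ℝ) (η₁ x₁), W (x₁, y) := by
            rw [e₁, integral_indicator measurableSet_Ioo]
        _ = ∫ y in Ioo (0:ℝ) (η₁ x₁), (η₀ x₁ / η₁ x₁) * v₀ (x₁, η₀ x₁ / η₁ x₁ * y) := rfl
        _ = ∫ y in Ioo (0:ℝ) (η₀ x₁), v₀ (x₁, y) :=
            oneD_integral (a := η₀ x₁) (b := η₁ x₁) (fun t => v₀ (x₁, t)) ha hb
        _ = ∫ y, F₀ (x₁, y) := by rw [e₀, integral_indicator measurableSet_Ioo]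
    · have e1 : ∀ y : ℝ, F₁ (x₁, y) = 0 := fun y => by
        rw [show F₁ (x₁, y) = (fun y => F₁ (x₁, y)) y from rfl, fib₁ x₁, if_neg h]; rfl
      have e0 : ∀ y : ℝ, F₀ (x₁, y) = 0 := fun y => by
        rw [show F₀ (x₁, y) = (fun y => F₀ (x₁, y)) y from rfl, fib₀ x₁, if_neg h]; rfl
      simp only [e1, e0]
  -- E3 : equality of fiber norm integrals, for all x₁
  have E3 : ∀ x₁ : ℝ, ∫ y, ‖F₁ (x₁, y)‖ = ∫ y, ‖F₀ (x₁, y)‖ := by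
    intro x₁
    rcases Classical.em (x₁ ∈ Ioo (0:ℝ) L₁) with h | h
    · obtain ⟨ha, hb⟩ := hab x₁ h
      have hc : 0 < η₀ x₁ / η₁ x₁ := div_pos ha hb
      have e₁ : (fun y => F₁ (x₁, y)) = (Ioo (0:ℝ) (η₁ x₁)).indicator (fun y => W (x₁, y)) := by
        rw [fib₁ x₁, if_pos h]
      have e₀ : (fun y => F₀ (x₁, y)) = (Ioo (0:ℝ) (η₀ x₁)).indicator (fun y => v₀ (x₁, y)) := by
        rw [fib₀ x₁, if_pos h]
      have n₁ : ∀ y : ℝ, ‖F₁ (x₁, y)‖ =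
          (Ioo (0:ℝ) (η₁ x₁)).indicator (fun y => ‖W (x₁, y)‖) y := by
        intro y
        rw [show F₁ (x₁, y) = (Ioo (0:ℝ) (η₁ x₁)).indicator (fun y => W (x₁, y)) y from
          congrFun e₁ y, norm_indicator_eq_indicator_norm]
      have n₀ : ∀ y : ℝ, ‖F₀ (x₁, y)‖ =
          (Ioo (0:ℝ) (η₀ x₁)).indicator (fun y => ‖v₀ (x₁, y)‖) y := by
        intro y
        rw [show F₀ (x₁, y) = (Ioo (0:ℝ) (η₀ x₁)).indicator (fun y => v₀ (x₁, y)) y from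
          congrFun e₀ y, norm_indicator_eq_indicator_norm]
      simp only [n₁, n₀]
      rw [integral_indicator measurableSet_Ioo, integral_indicator measurableSet_Ioo]
      have : ∀ y : ℝ, ‖W (x₁, y)‖ = (η₀ x₁ / η₁ x₁) * ‖v₀ (x₁, η₀ x₁ / η₁ x₁ * y)‖ := by
        intro y
        rw [show W (x₁, y) = (η₀ x₁ / η₁ x₁) * v₀ (x₁, η₀ x₁ / η₁ x₁ * y) from rfl, norm_mul,
          Real.norm_of_nonneg hc.le]
      simp only [this]
      exact oneD_integral (a := η₀ x₁) (b := η₁ x₁) (fun t => ‖v₀ (x₁, t)‖) ha hb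
    · have e1 : ∀ y : ℝ, F₁ (x₁, y) = 0 := fun y => by
        rw [show F₁ (x₁, y) = (fun y => F₁ (x₁, y)) y from rfl, fib₁ x₁, if_neg h]; rfl
      have e0 : ∀ y : ℝ, F₀ (x₁, y) = 0 := fun y => by
        rw [show F₀ (x₁, y) = (fun y => F₀ (x₁, y)) y from rfl, fib₀ x₁, if_neg h]; rfl
      simp only [e1, e0]
  -- E1 : fiber integrability
  have E1 : ∀ x₁ : ℝ, Integrable (fun y => F₀ (x₁, y)) volume →
      Integrable (fun y => F₁ (x₁, y)) volume := by
    intro x₁ hint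
    rcases Classical.em (x₁ ∈ Ioo (0:ℝ) L₁) with h | h
    · obtain ⟨ha, hb⟩ := hab x₁ h
      rw [fib₀ x₁, if_pos h] at hint
      rw [fib₁ x₁, if_pos h]
      rw [integrable_indicator_iff measurableSet_Ioo] at hint ⊢
      exact oneD_integrable (a := η₀ x₁) (b := η₁ x₁) (fun t => v₀ (x₁, t)) ha hb hint
    · rw [fib₁ x₁, if_neg h]
      exact integrable_zero _ _ _
  -- integrability of F₁
  have hF₁sm : AEStronglyMeasurable F₁ ((volume : Measure ℝ).prod volume) := by
    rw [← Measure.volume_eq_prod]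
    exact (hWm.indicator hs₁).aestronglyMeasurable
  have hF₁p : Integrable F₁ ((volume : Measure ℝ).prod volume) := by
    refine (integrable_prod_iff hF₁sm).2 ⟨?_, ?_⟩
    · exact hF₀p.prod_right_ae.mono fun x₁ h => E1 x₁ h
    · exact hF₀p.integral_norm_prod_left.congr (Filter.Eventually.of_forall fun x₁ => (E3 x₁).symm)
  have hF₁ : Integrable F₁ (volume : Measure (ℝ × ℝ)) := by
    rw [Measure.volume_eq_prod]; exact hF₁p
  refine ⟨(integrable_indicator_iff hs₁).1 hF₁, ?_⟩
  calc ∫ p in subgraph L₁ η₁, W p = ∫ p, F₁ p := (integral_indicator hs₁).symm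
    _ = ∫ p, F₁ p ∂((volume : Measure ℝ).prod volume) := by rw [← Measure.volume_eq_prod]
    _ = ∫ x₁, ∫ y, F₁ (x₁, y) := integral_prod F₁ hF₁p
    _ = ∫ x₁, ∫ y, F₀ (x₁, y) := by
        congr 1
        exact funext fun x₁ => E2 x₁
    _ = ∫ p, F₀ p ∂((volume : Measure ℝ).prod volume) := (integral_prod F₀ hF₀p).symm
    _ = ∫ p, F₀ p := by rw [← Measure.volume_eq_prod]
    _ = ∫ p in subgraph L₁ η₀, v₀ p := integral_indicator hs₀

end Key

set_option maxHeartbeats 1000000 in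
/-- Discrete Reynolds transport (Lemma \ref{lm_DRT}): with
`X(x₁,x₂) = (x₁, η₀(x₁)x₂/η₁(x₁))` mapping `Ω_{η₁}` onto `Ω_{η₀}`,
`D_t ∫ v = ∫_{Ω_{η₁}} (D_t^M v + div w_h · v₀∘X)`, where
`div w_h = (η₁ − η₀)/(τ·η₁)` is the divergence of the discrete ALE velocity. -/
theorem discrete_reynolds_transport
    (L₁ : ℝ) (hL : 0 < L₁)
    (η₀ η₁ : ℝ → ℝ) (hη₀ : Continuous η₀) (hη₁ : Continuous η₁)
    (hpos₀ : ∀ x₁ ∈ Set.Icc (0 : ℝ) L₁, 0 < η₀ x₁)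
    (hpos₁ : ∀ x₁ ∈ Set.Icc (0 : ℝ) L₁, 0 < η₁ x₁)
    (τ : ℝ) (hτ : 0 < τ)
    (v₀ v₁ : ℝ × ℝ → ℝ) (hv₀m : Measurable v₀) (hv₁m : Measurable v₁)
    (hv₀ : IntegrableOn v₀ (subgraph L₁ η₀)) (hv₁ : IntegrableOn v₁ (subgraph L₁ η₁))
    (X : ℝ × ℝ → ℝ × ℝ) (hX : ∀ x : ℝ × ℝ, X x = (x.1, η₀ x.1 * x.2 / η₁ x.1)) :
    IntegrableOn
      (fun x : ℝ × ℝ =>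
        (v₁ x - v₀ (X x)) / τ + ((η₁ x.1 - η₀ x.1) / (τ * η₁ x.1)) * v₀ (X x))
      (subgraph L₁ η₁) ∧
    (1 / τ) * ((∫ x in subgraph L₁ η₁, v₁ x) - ∫ x in subgraph L₁ η₀, v₀ x)
      = ∫ x in subgraph L₁ η₁,
          ((v₁ x - v₀ (X x)) / τ + ((η₁ x.1 - η₀ x.1) / (τ * η₁ x.1)) * v₀ (X x)) := by
  obtain ⟨hWint, hWeq⟩ := key_cov L₁ η₀ η₁ hη₀ hη₁ hpos₀ hpos₁ v₀ hv₀m hv₀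
  have hs₁ : MeasurableSet (subgraph L₁ η₁) := (subgraph_isOpen hη₁).measurableSet
  have hEq : Set.EqOn
      (fun p : ℝ × ℝ =>
        (1 / τ) * v₁ p - (1 / τ) * ((η₀ p.1 / η₁ p.1) * v₀ (p.1, η₀ p.1 / η₁ p.1 * p.2)))
      (fun p : ℝ × ℝ =>
        (v₁ p - v₀ (X p)) / τ + ((η₁ p.1 - η₀ p.1) / (τ * η₁ p.1)) * v₀ (X p))
      (subgraph L₁ η₁) := by
    intro p hp
    have hb : 0 < η₁ p.1 := hpos₁ p.1 ⟨hp.1.1.le, hp.1.2.le⟩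
    have hXp : v₀ (X p) = v₀ (p.1, η₀ p.1 / η₁ p.1 * p.2) := by
      rw [hX p, mul_div_right_comm]
    simp only
    rw [← hXp]
    field_simp
    ring
  have hg : IntegrableOn
      (fun p : ℝ × ℝ =>
        (1 / τ) * v₁ p - (1 / τ) * ((η₀ p.1 / η₁ p.1) * v₀ (p.1, η₀ p.1 / η₁ p.1 * p.2)))
      (subgraph L₁ η₁) := (hv₁.const_mul _).sub (hWint.const_mul _)
  refine ⟨hg.congr_fun hEq hs₁, ?_⟩
  calc (1 / τ) * ((∫ x in subgraph L₁ η₁, v₁ x) - ∫ x in subgraph L₁ η₀, v₀ x)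
      = ∫ p in subgraph L₁ η₁,
          ((1 / τ) * v₁ p - (1 / τ) * ((η₀ p.1 / η₁ p.1) * v₀ (p.1, η₀ p.1 / η₁ p.1 * p.2))) := by
        rw [integral_sub (hv₁.const_mul _) (hWint.const_mul _), integral_const_mul,
          integral_const_mul, hWeq]
        ring
    _ = _ := setIntegral_congr_fun hs₁ hEq
end

section
/- Let η, η_h : ℝ → ℝ be continuously differentiable with η > 0 and η_h > 0 on [0,L₁], and define Φ : ℝ² → ℝ² (for x₁ with η_h(x₁) ≠ 0) by Φ(x₁,x₂) = (x₁, (η(x₁)/η_h(x₁))·x₂); note Φ maps Ω_{η_h} onto Ω_η. Let u : ℝ² → ℝ² be continuously differentiable with (div u)(y) = 0 for all y ∈ Ω_η. Then for every x = (x₁,x₂) ∈ Ω_{η_h}: div(u∘Φ)(x) = (η(x₁)/η_h(x₁) − 1)·(∂₂u₂)(Φ(x)) + x₂·(d/dx₁)(η/η_h)(x₁)·(∂₂u₁)(Φ(x)), where ∂₂ denotes the partial derivative in the second coordinate and u = (u₁,u₂). -/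
open MeasureTheory

/-- The divergence `div u = tr(Du)` with `(Du)_{ij} = ∂_j u_i`. -/
noncomputable def divg (u : ℝ × ℝ → ℝ × ℝ) (x : ℝ × ℝ) : ℝ :=
  (fderiv ℝ u x (1, 0)).1 + (fderiv ℝ u x (0, 1)).2

/-- Divergence defect under the change of geometry
`Φ = A_η ∘ A_{η_h}⁻¹ : Ω_{η_h} → Ω_η` (cf. the proof of
Theorem \ref{thm:projection-velocity}): if `div u = 0` on `Ω_η`, then on `Ω_{η_h}`
`div(u∘Φ) = (η/η_h − 1)·∂₂u₂∘Φ + x₂·(η/η_h)′·∂₂u₁∘Φ`. -/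
theorem divergence_defect_of_geometry_change
    (L₁ : ℝ) (hL : 0 < L₁)
    (η ηh : ℝ → ℝ) (hη : ContDiff ℝ 1 η) (hηh : ContDiff ℝ 1 ηh)
    (hpos : ∀ x₁ ∈ Set.Icc (0 : ℝ) L₁, 0 < η x₁)
    (hposh : ∀ x₁ ∈ Set.Icc (0 : ℝ) L₁, 0 < ηh x₁)
    (u : ℝ × ℝ → ℝ × ℝ) (hu : ContDiff ℝ 1 u)
    (hdiv : ∀ y ∈ subgraph L₁ η, divg u y = 0)
    (Φ : ℝ × ℝ → ℝ × ℝ) (hΦ : ∀ x : ℝ × ℝ, Φ x = (x.1, η x.1 / ηh x.1 * x.2)) :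
    ∀ x ∈ subgraph L₁ ηh,
      divg (u ∘ Φ) x
        = (η x.1 / ηh x.1 - 1) * (fderiv ℝ u (Φ x) (0, 1)).2
          + x.2 * deriv (fun s => η s / ηh s) x.1 * (fderiv ℝ u (Φ x) (0, 1)).1 := by
  intro x hx
  obtain ⟨hx1, hx2⟩ := hx
  have hx1' : x.1 ∈ Set.Icc (0:ℝ) L₁ := ⟨le_of_lt hx1.1, le_of_lt hx1.2⟩
  have hηhpos := hposh x.1 hx1'
  have hηpos := hpos x.1 hx1'
  have hne : ηh x.1 ≠ 0 := ne_of_gt hηhpos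
  set f : ℝ → ℝ := fun s => η s / ηh s with hfdef
  have hdf : DifferentiableAt ℝ f x.1 :=
    ((hη.differentiable one_ne_zero) x.1).div ((hηh.differentiable one_ne_zero) x.1) hne
  set c : ℝ := deriv f x.1 with hc
  have hf' : HasDerivAt f c x.1 := hdf.hasDerivAt
  have hΦeq : Φ = fun p : ℝ × ℝ => (p.1, f p.1 * p.2) := funext hΦ
  have h1 : HasFDerivAt (fun p : ℝ × ℝ => f p.1)
      (c • (ContinuousLinearMap.fst ℝ ℝ ℝ)) x :=
    hf'.comp_hasFDerivAt x hasFDerivAt_fst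
  have h2 : HasFDerivAt (fun p : ℝ × ℝ => f p.1 * p.2)
      (f x.1 • ContinuousLinearMap.snd ℝ ℝ ℝ
        + x.2 • (c • ContinuousLinearMap.fst ℝ ℝ ℝ)) x :=
    h1.mul hasFDerivAt_snd
  set Φ' : (ℝ × ℝ) →L[ℝ] (ℝ × ℝ) :=
    (ContinuousLinearMap.fst ℝ ℝ ℝ).prod
      (f x.1 • ContinuousLinearMap.snd ℝ ℝ ℝ
        + x.2 • (c • ContinuousLinearMap.fst ℝ ℝ ℝ)) with hΦ'def
  have hΦder : HasFDerivAt Φ Φ' x := by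
    rw [hΦeq]
    exact HasFDerivAt.prodMk hasFDerivAt_fst h2
  have hfx_pos : 0 < f x.1 := div_pos hηpos hηhpos
  have hΦx : Φ x ∈ subgraph L₁ η := by
    rw [hΦ x]
    refine ⟨hx1, mul_pos hfx_pos hx2.1, ?_⟩
    calc η x.1 / ηh x.1 * x.2 < η x.1 / ηh x.1 * ηh x.1 :=
          mul_lt_mul_of_pos_left hx2.2 hfx_pos
    _ = η x.1 := div_mul_cancel₀ _ hne
  have hud : DifferentiableAt ℝ u (Φ x) := (hu.differentiable one_ne_zero) (Φ x)
  set D : (ℝ × ℝ) →L[ℝ] (ℝ × ℝ) := fderiv ℝ u (Φ x) with hD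
  have hcomp : HasFDerivAt (u ∘ Φ) (D.comp Φ') x :=
    (hud.hasFDerivAt).comp x hΦder
  have hDiv := hdiv (Φ x) hΦx
  unfold divg at hDiv ⊢
  rw [hcomp.fderiv]
  have e1 : Φ' (1, 0) = ((1 : ℝ), x.2 * c) := by
    simp [hΦ'def]
  have e2 : Φ' (0, 1) = ((0 : ℝ), f x.1) := by
    simp [hΦ'def]
  have e3 : D ((1 : ℝ), x.2 * c) = D (1, 0) + (x.2 * c) • D (0, 1) := by
    have : ((1 : ℝ), x.2 * c) = ((1 : ℝ), (0 : ℝ)) + (x.2 * c) • ((0 : ℝ), (1 : ℝ)) := by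
      simp [Prod.ext_iff]
    rw [this, map_add, D.map_smul]
  have e4 : D ((0 : ℝ), f x.1) = f x.1 • D (0, 1) := by
    have : ((0 : ℝ), f x.1) = f x.1 • ((0 : ℝ), (1 : ℝ)) := by
      simp [Prod.ext_iff]
    rw [this, D.map_smul]
  simp only [ContinuousLinearMap.comp_apply, e1, e2, e3, e4, Prod.fst_add, Prod.snd_add,
    Prod.smul_fst, Prod.smul_snd, smul_eq_mul]
  have hDiv' : (D (1, 0)).1 + (D (0, 1)).2 = 0 := hDiv
  ring_nf
  ring_nf at hDiv'
  rw [show f x.1 = η x.1 * (ηh x.1)⁻¹ from div_eq_mul_inv _ _]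
  ring_nf
  linarith
end
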